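/- arXiv:1405.4093 — 6 statements merged into one kernel-verified Lean document; each statement's English description precedes it below -/
import Mathlib

section
/- Let (V,⟨·,·⟩) be a finite-dimensional symplectic vector space over a field F, and suppose V = ⊕_{i∈I} V_i is a direct sum of linear subspaces such that for every i∈I there is a unique j∈I with ⟨V_i,V_j⟩ ≠ 0. Then there exists a basis {u_1,u_1',…,u_n,u_n'} of V contained in ∪_i V_i such that ⟨u_i,u_j⟩ = ⟨u_i',u_j'⟩ = 0 for all i,j, and ⟨u_i,u_j'⟩ = δ_{ij}. -/
/-!
Pick a nonzero homogeneous vector `u ∈ V_i`. Nondegeneracy, together with the fact that `V` is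
spanned by its homogeneous pieces, yields a homogeneous `u' ∈ V_j` with `⟨u, u'⟩ = 1`. By the
uniqueness hypothesis `⟨u, V_k⟩ = 0` unless `k = j`, and `⟨u', V_k⟩ = 0` unless `k = i`, so the
projection `x ↦ x + ⟨u', x⟩ u - ⟨u, x⟩ u'` onto the orthogonal complement of `span {u, u'}` maps
every `V_k` into itself. Hence that complement is again nondegenerate and spanned by its
homogeneous pieces, and induction on the subspace finishes the proof.
-/

open Module Submodule
open LinearMap (BilinForm)

section pairCons

variable {V : Type*} {n : ℕ} (u u' : V) (e : Fin n × Bool → V)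

def pairCons : Fin (n + 1) × Bool → V :=
  fun p => Fin.cons (α := fun _ => V) (cond p.2 u' u) (fun k => e (k, p.2)) p.1

@[simp]
theorem pairCons_zero (b : Bool) : pairCons u u' e (0, b) = cond b u' u := rfl

@[simp]
theorem pairCons_succ (k : Fin n) (b : Bool) : pairCons u u' e (k.succ, b) = e (k, b) := rfl

theorem range_pairCons : Set.range (pairCons u u' e) = {u, u'} ∪ Set.range e := by
  ext x
  constructor
  · rintro ⟨⟨k, b⟩, rfl⟩
    cases k using Fin.cases with
    | zero => cases b <;> simp
    | succ k => exact Or.inr ⟨(k, b), rfl⟩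
  · rintro ((rfl | rfl) | ⟨p, rfl⟩)
    exacts [⟨(0, false), rfl⟩, ⟨(0, true), rfl⟩, ⟨(p.1.succ, p.2), rfl⟩]

end pairCons

namespace LinearMap.BilinForm

variable {F V : Type*} [Field F] [AddCommGroup V] [Module F V] (B : BilinForm F V)

structure IsSymplecticFamily {n : ℕ} (e : Fin n × Bool → V) : Prop where
  apply_false_false : ∀ i j, B (e (i, false)) (e (j, false)) = 0
  apply_true_true : ∀ i j, B (e (i, true)) (e (j, true)) = 0
  apply_false_true : ∀ i j, B (e (i, false)) (e (j, true)) = if i = j then 1 else 0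

variable {B}

theorem IsSymplecticFamily.linearIndependent {n : ℕ} {e : Fin n × Bool → V}
    (he : B.IsSymplecticFamily e) : LinearIndependent F e := by
  classical
  let f : V →ₗ[F] Fin n × Bool → F :=
    LinearMap.pi fun p => cond p.2 (B (e (p.1, false))) (B.flip (e (p.1, true)))
  have hf : f ∘ e = fun p => Pi.single p 1 := by
    funext ⟨j, c⟩ ⟨k, d⟩
    cases c <;> cases d <;>
      simp [f, Pi.single_apply, he.apply_false_false, he.apply_true_true, he.apply_false_true,
        eq_comm]
  exact .of_comp f (hf ▸ Pi.linearIndependent_single_one _ F)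

theorem IsSymplecticFamily.pairCons (hB : B.IsAlt) {n : ℕ} {e : Fin n × Bool → V}
    (he : B.IsSymplecticFamily e) {u u' : V} (huu' : B u u' = 1) (hu : ∀ p, B u (e p) = 0)
    (hu' : ∀ p, B u' (e p) = 0) : B.IsSymplecticFamily (pairCons u u' e) := by
  have hu₂ p : B (e p) u = 0 := hB.eq_iff.1 (hu p)
  have hu'₂ p : B (e p) u' = 0 := hB.eq_iff.1 (hu' p)
  constructor <;> intro i j <;> cases i using Fin.cases <;> cases j using Fin.cases <;>
    simp [hB.self_eq_zero, huu', hu, hu', hu₂, hu'₂, he.apply_false_false, he.apply_true_true,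
      he.apply_false_true, (Fin.succ_ne_zero _).symm]

variable (B) in
def symplecticProj (u u' : V) : V →ₗ[F] V :=
  LinearMap.id + (B u').smulRight u - (B u).smulRight u'

variable {u u' x y : V}

theorem symplecticProj_apply : B.symplecticProj u u' x = x + B u' x • u - B u x • u' := rfl

theorem mem_orthogonal_span_pair : x ∈ B.orthogonal (span F {u, u'}) ↔ B u x = 0 ∧ B u' x = 0 := by
  refine ⟨fun h => ⟨h u (subset_span (by simp)), h u' (subset_span (by simp))⟩, ?_⟩
  rintro ⟨hu, hu'⟩ _ hz
  obtain ⟨a, b, rfl⟩ := mem_span_pair.1 hz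
  simp [hu, hu']

theorem symplecticProj_mem_orthogonal (hB : B.IsAlt) (huu' : B u u' = 1) :
    B.symplecticProj u u' x ∈ B.orthogonal (span F {u, u'}) := by
  have hu'u : B u' u = -1 := by rw [← hB.neg_eq u u', huu']
  rw [mem_orthogonal_span_pair, symplecticProj_apply]
  constructor <;> simp [hB.self_eq_zero, huu', hu'u]

theorem symplecticProj_eq_self (hu : B u x = 0) (hu' : B u' x = 0) :
    B.symplecticProj u u' x = x := by
  simp [symplecticProj_apply, hu, hu']

theorem apply_symplecticProj (hu : B y u = 0) (hu' : B y u' = 0) :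
    B y (B.symplecticProj u u' x) = B y x := by
  simp [symplecticProj_apply, hu, hu']

theorem sub_symplecticProj_mem_span : x - B.symplecticProj u u' x ∈ span F {u, u'} :=
  mem_span_pair.2 ⟨-B u' x, B u x, by rw [symplecticProj_apply]; module⟩

theorem symplecticProj_mem {S : Submodule F V} (hx : x ∈ S) (hu : B u' x ≠ 0 → u ∈ S)
    (hu' : B u x ≠ 0 → u' ∈ S) : B.symplecticProj u u' x ∈ S := by
  rw [symplecticProj_apply]
  refine sub_mem (add_mem hx ?_) ?_
  · by_cases h : B u' x = 0
    · simp [h]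
    · exact smul_mem _ _ (hu h)
  · by_cases h : B u x = 0
    · simp [h]
    · exact smul_mem _ _ (hu' h)

theorem symplecticProj_mem_inf_orthogonal {W : Submodule F V} (hB : B.IsAlt) (huu' : B u u' = 1)
    (hu : u ∈ W) (hu' : u' ∈ W) (hx : x ∈ W) :
    B.symplecticProj u u' x ∈ W ⊓ B.orthogonal (span F {u, u'}) :=
  ⟨symplecticProj_mem hx (fun _ => hu) (fun _ => hu'), symplecticProj_mem_orthogonal hB huu'⟩

theorem separatingLeft_restrict_inf_orthogonal {W : Submodule F V} (hB : B.IsAlt)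
    (huu' : B u u' = 1) (hu : u ∈ W) (hu' : u' ∈ W) (hW : (B.restrict W).SeparatingLeft) :
    (B.restrict (W ⊓ B.orthogonal (span F {u, u'}))).SeparatingLeft := by
  rintro ⟨y, hyW, hy⟩ hy₀
  obtain ⟨hyu, hyu'⟩ := mem_orthogonal_span_pair.1 hy
  have : (⟨y, hyW⟩ : W) = 0 := hW _ fun ⟨z, hz⟩ => by
    change B y z = 0
    rw [← apply_symplecticProj (hB.eq_iff.1 hyu) (hB.eq_iff.1 hyu')]
    exact hy₀ ⟨_, symplecticProj_mem_inf_orthogonal hB huu' hu hu' hz⟩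
  exact Subtype.ext (by simpa using this)

theorem inf_orthogonal_span_pair_lt {W : Submodule F V} (huu' : B u u' = 1) (hu' : u' ∈ W) :
    W ⊓ B.orthogonal (span F {u, u'}) < W :=
  inf_lt_left.2 fun h => one_ne_zero (huu' ▸ (mem_orthogonal_span_pair.1 (h hu')).1)

variable {I : Type*} {Vi : I → Submodule F V}

theorem exists_homogeneous_hyperbolic_pair {W : Submodule F V}
    (hW : (B.restrict W).SeparatingLeft) (hW₀ : W ≠ ⊥) (hWV : W ≤ ⨆ i, Vi i ⊓ W) :
    ∃ i j u u', u ∈ Vi i ⊓ W ∧ u' ∈ Vi j ⊓ W ∧ B u u' = 1 := by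
  obtain ⟨i, hi⟩ : ∃ i, Vi i ⊓ W ≠ ⊥ := by
    by_contra! h
    exact hW₀ (eq_bot_iff.2 (hWV.trans (iSup_eq_bot.2 h).le))
  obtain ⟨u, hu, hu₀⟩ := (Submodule.ne_bot_iff _).1 hi
  obtain ⟨j, hj⟩ : ∃ j, ¬ Vi j ⊓ W ≤ LinearMap.ker (B u) := by
    by_contra! h
    have : (⟨u, hu.2⟩ : W) = 0 := hW _ fun w => hWV.trans (iSup_le h) w.2
    exact hu₀ (by simpa using this)
  obtain ⟨x, hx, hux⟩ := SetLike.not_le_iff_exists.1 hj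
  exact ⟨i, j, u, (B u x)⁻¹ • x, hu, smul_mem _ _ hx, by simp [inv_mul_cancel₀ hux]⟩

theorem symplecticProj_mem_of_mem (hB : B.IsAlt)
    (huniq : ∀ i, {j | ∃ a ∈ Vi i, ∃ b ∈ Vi j, B a b ≠ 0}.Subsingleton) {i j k : I}
    (hu : u ∈ Vi i) (hu' : u' ∈ Vi j) (huu' : B u u' = 1) (hx : x ∈ Vi k) :
    B.symplecticProj u u' x ∈ Vi k := by
  refine symplecticProj_mem hx (fun h => ?_) (fun h => ?_)
  · have hu'u : B u' u ≠ 0 := by simp [← hB.neg_eq u u', huu']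
    rwa [huniq j ⟨u', hu', x, hx, h⟩ ⟨u', hu', u, hu, hu'u⟩]
  · rwa [huniq i ⟨u, hu, x, hx, h⟩ ⟨u, hu, u', hu', by simp [huu']⟩]

theorem inf_orthogonal_span_pair_le_iSup (hB : B.IsAlt)
    (huniq : ∀ i, {j | ∃ a ∈ Vi i, ∃ b ∈ Vi j, B a b ≠ 0}.Subsingleton) {W : Submodule F V}
    (hWV : W ≤ ⨆ i, Vi i ⊓ W) {i j : I} (hu : u ∈ Vi i ⊓ W) (hu' : u' ∈ Vi j ⊓ W)
    (huu' : B u u' = 1) :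
    W ⊓ B.orthogonal (span F {u, u'}) ≤ ⨆ k, Vi k ⊓ (W ⊓ B.orthogonal (span F {u, u'})) := by
  set P := B.symplecticProj u u'
  calc W ⊓ B.orthogonal (span F {u, u'})
      ≤ (⨆ k, Vi k ⊓ W).map P := fun x ⟨hxW, hx⟩ => by
        obtain ⟨hux, hu'x⟩ := mem_orthogonal_span_pair.1 hx
        exact ⟨x, hWV hxW, symplecticProj_eq_self hux hu'x⟩
    _ = ⨆ k, (Vi k ⊓ W).map P := map_iSup _ _
    _ ≤ ⨆ k, Vi k ⊓ (W ⊓ B.orthogonal (span F {u, u'})) :=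
      iSup_mono fun k => map_le_iff_le_comap.2 fun x ⟨hxk, hxW⟩ => mem_inf.2
        ⟨symplecticProj_mem_of_mem hB huniq hu.1 hu'.1 huu' hxk,
          symplecticProj_mem_inf_orthogonal hB huu' hu.2 hu'.2 hxW⟩

theorem exists_isSymplecticFamily [FiniteDimensional F V] (hB : B.IsAlt)
    (huniq : ∀ i, {j | ∃ a ∈ Vi i, ∃ b ∈ Vi j, B a b ≠ 0}.Subsingleton) (W : Submodule F V)
    (hW : (B.restrict W).SeparatingLeft) (hWV : W ≤ ⨆ i, Vi i ⊓ W) :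
    ∃ (n : ℕ) (e : Fin n × Bool → V), B.IsSymplecticFamily e ∧ (∀ p, ∃ i, e p ∈ Vi i ⊓ W) ∧
      W ≤ span F (Set.range e) := by
  induction W using WellFoundedLT.induction with
  | _ W ih =>
  rcases eq_or_ne W ⊥ with rfl | hW₀
  · exact ⟨0, fun p => p.1.elim0, ⟨fun i => i.elim0, fun i => i.elim0, fun i => i.elim0⟩,
      fun p => p.1.elim0, bot_le⟩
  obtain ⟨i, j, u, u', hu, hu', huu'⟩ := exists_homogeneous_hyperbolic_pair hW hW₀ hWV
  obtain ⟨n, e, he, heV, hspan⟩ := ih _ (inf_orthogonal_span_pair_lt huu' hu'.2)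
    (separatingLeft_restrict_inf_orthogonal hB huu' hu.2 hu'.2 hW)
    (inf_orthogonal_span_pair_le_iSup hB huniq hWV hu hu' huu')
  have he' p : e p ∈ B.orthogonal (span F {u, u'}) := (heV p).elim fun _ h => h.2.2
  refine ⟨n + 1, pairCons u u' e,
    he.pairCons hB huu' (fun p => (mem_orthogonal_span_pair.1 (he' p)).1)
      (fun p => (mem_orthogonal_span_pair.1 (he' p)).2), ?_, fun x hx => ?_⟩
  · rintro ⟨k, b⟩
    cases k using Fin.cases with
    | zero => cases b; exacts [⟨i, hu⟩, ⟨j, hu'⟩]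
    | succ k => exact (heV (k, b)).imp fun _ h => ⟨h.1, h.2.1⟩
  · rw [range_pairCons, span_union, ← sub_add_cancel x (B.symplecticProj u u' x)]
    exact add_mem (mem_sup_left sub_symplecticProj_mem_span)
      (mem_sup_right (hspan (symplecticProj_mem_inf_orthogonal hB huu' hu.2 hu'.2 hx)))

end LinearMap.BilinForm

/-- Lemma 2.1: a finite-dimensional symplectic space which is a direct sum of
subspaces, each pairing nontrivially with exactly one other (or itself), has a
symplectic basis consisting of elements of the given subspaces. -/
theorem symplectic_homogeneous_basis
    (F : Type*) [Field F] (V : Type*) [AddCommGroup V] [Module F V]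
    [FiniteDimensional F V]
    (B : LinearMap.BilinForm F V)
    (halt : ∀ v : V, B v v = 0)
    (hnd : ∀ v : V, (∀ w : V, B v w = 0) → v = 0)
    (I : Type*) [DecidableEq I] (Vi : I → Submodule F V)
    (hint : DirectSum.IsInternal Vi)
    (huniq : ∀ i : I, ∃! j : I, ∃ a ∈ Vi i, ∃ b ∈ Vi j, B a b ≠ 0) :
    ∃ (n : ℕ) (b : Module.Basis (Fin n × Bool) F V),
      (∀ p : Fin n × Bool, ∃ i : I, b p ∈ Vi i) ∧
      (∀ i j : Fin n, B (b (i, false)) (b (j, false)) = 0) ∧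
      (∀ i j : Fin n, B (b (i, true)) (b (j, true)) = 0) ∧
      (∀ i j : Fin n, B (b (i, false)) (b (j, true)) = if i = j then 1 else 0) := by
  have hsep : (B.restrict ⊤).SeparatingLeft := fun v hv =>
    Subtype.ext (hnd v fun w => hv ⟨w, mem_top⟩)
  obtain ⟨n, e, he, heV, hspan⟩ := LinearMap.BilinForm.exists_isSymplecticFamily halt
    (fun i _ hj _ hk => (huniq i).unique hj hk) ⊤ hsep (by simp [hint.submodule_iSup_eq_top])
  refine ⟨n, .mk he.linearIndependent hspan, ?_⟩
  simp only [Basis.coe_mk]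
  exact ⟨fun p => (heV p).imp fun _ h => h.1, he.apply_false_false,
    he.apply_true_true, he.apply_false_true⟩
end

section
/- Let (V,⟨·,·⟩) be a finite-dimensional vector space over a field F of characteristic ≠ 2 with a nondegenerate symmetric bilinear form, and suppose V = ⊕_{i∈I} V_i is a direct sum of linear subspaces such that for every i∈I there is a unique j∈I with ⟨V_i,V_j⟩ ≠ 0. Then there exists a basis B = {u_1,v_1,…,u_r,v_r,z_1,…,z_q} of V with B ⊆ ∪_i V_i such that ⟨z_i,z_i⟩ ≠ 0, ⟨u_i,v_i⟩ = 1, and any other inner product of two distinct elements of B is zero. -/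
/-!
Let `σ i` be the unique `j` with `⟨V_i, V_j⟩ ≠ 0`. By symmetry of the form `σ` is an involution,
and `V_i ⊥ V_j` whenever `j ≠ σ i`; since `V = ⊕ V_j`, nondegeneracy of the form on `V` then makes
the pairing `V_i × V_{σ i} → F` perfect. On a fixed point of `σ` the form restricted to `V_i` is
symmetric and nondegenerate, so (as `2 ≠ 0`) it has an orthogonal basis of anisotropic vectors
`z`; on an orbit `{i, σ i}` of size two, a basis `u` of `V_i` and the dual basis `v` of `V_{σ i}`
are hyperbolic pairs. Choosing one point of each orbit and gluing these bases along the direct sum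
gives the required basis.
-/

open Module

universe u w

section PairPartner

variable {P Q : Type*}

def pairPartner : (P × Bool) ⊕ Q → (P × Bool) ⊕ Q :=
  Sum.map (Prod.map id not) id

theorem ne_pairPartner_of {p p' : (P × Bool) ⊕ Q}
    (h₁ : ¬(p = p' ∧ ∃ l, p = Sum.inr l))
    (h₂ : ¬∃ i, (p = Sum.inl (i, false) ∧ p' = Sum.inl (i, true)) ∨
      (p = Sum.inl (i, true) ∧ p' = Sum.inl (i, false))) :
    p' ≠ pairPartner p := by
  rintro rfl
  rcases p with ⟨i, _ | _⟩ | l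
  · exact h₂ ⟨i, .inl ⟨rfl, rfl⟩⟩
  · exact h₂ ⟨i, .inr ⟨rfl, rfl⟩⟩
  · exact h₁ ⟨rfl, l, rfl⟩

/-- The Gram matrix of `v` is block diagonal, with a block `!![0, 1; 1, 0]` for each hyperbolic pair
`(v (.inl (i, false)), v (.inl (i, true)))` and a nonzero `1 × 1` block for each `v (.inr l)`. -/
structure IsHyperbolicOrthogonal {F V : Type*} [Field F] [AddCommGroup V] [Module F V]
    (B : LinearMap.BilinForm F V) (v : (P × Bool) ⊕ Q → V) : Prop where
  apply_self_ne_zero : ∀ l, B (v (.inr l)) (v (.inr l)) ≠ 0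
  apply_pair_eq_one : ∀ i, B (v (.inl (i, false))) (v (.inl (i, true))) = 1
  apply_eq_zero : ∀ p p', p' ≠ pairPartner p → B (v p) (v p') = 0

theorem IsHyperbolicOrthogonal.comp_sumMap {F V P' Q' : Type*} [Field F] [AddCommGroup V]
    [Module F V] {B : LinearMap.BilinForm F V} {v : (P × Bool) ⊕ Q → V}
    (hv : IsHyperbolicOrthogonal B v) {f : P' → P} {g : Q' → Q}
    (hf : Function.Injective f) (hg : Function.Injective g) :
    IsHyperbolicOrthogonal B (v ∘ Sum.map (Prod.map f id) g) where
  apply_self_ne_zero l := hv.apply_self_ne_zero (g l)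
  apply_pair_eq_one i := hv.apply_pair_eq_one (f i)
  apply_eq_zero p p' h := by
    refine hv.apply_eq_zero _ _ fun h' => h ((hf.prodMap Function.injective_id).sumMap hg ?_)
    rw [h']
    rcases p with ⟨i, β⟩ | l <;> rfl

theorem IsHyperbolicOrthogonal.exists_basis_fin {F V : Type*} [Field F] [AddCommGroup V]
    [Module F V] [FiniteDimensional F V] {B : LinearMap.BilinForm F V}
    {b : Basis ((P × Bool) ⊕ Q) F V} (hb : IsHyperbolicOrthogonal B b) :
    ∃ (r q : ℕ) (b' : Basis ((Fin r × Bool) ⊕ Fin q) F V),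
      (∀ p, ∃ p₀, b' p = b p₀) ∧ IsHyperbolicOrthogonal B b' := by
  have := Module.Finite.finite_basis b
  have : Finite (P × Bool) := .sum_left Q
  have : Finite P := .prod_left Bool
  have : Finite Q := .sum_right (P × Bool)
  have := Fintype.ofFinite P
  have := Fintype.ofFinite Q
  let eP := (Fintype.equivFin P).symm
  let eQ := (Fintype.equivFin Q).symm
  refine ⟨_, _, b.reindex (Equiv.sumCongr (Equiv.prodCongr eP (Equiv.refl Bool)) eQ).symm,
    fun p => ⟨_, Basis.reindex_apply _ _ _⟩, ?_⟩
  have hcoe : ⇑(b.reindex (Equiv.sumCongr (Equiv.prodCongr eP (Equiv.refl Bool)) eQ).symm) =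
      b ∘ Sum.map (Prod.map eP id) eQ :=
    funext fun _ => Basis.reindex_apply _ _ _
  rw [hcoe]
  exact hb.comp_sumMap eP.injective eQ.injective

end PairPartner

theorem Function.Involutive.exists_equiv_pairPartner {I : Type u} {σ : I → I}
    (hσ : Function.Involutive σ) :
    ∃ (P Q : Type u) (e : (P × Bool) ⊕ Q ≃ I), ∀ j, σ (e j) = e (pairPartner j) := by
  classical
  let _ : LinearOrder I := IsWellOrder.linearOrder WellOrderingRel
  let e : ({i // i < σ i} × Bool) ⊕ {i // σ i = i} ≃ I :=
    { toFun := Sum.elim (fun x => bif x.2 then σ x.1 else x.1) Subtype.val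
      invFun := fun i =>
        if h : i < σ i then .inl (⟨i, h⟩, false)
        else if h' : σ i < i then .inl (⟨σ i, by rwa [hσ i]⟩, true)
        else .inr ⟨i, le_antisymm (not_lt.1 h) (not_lt.1 h')⟩
      left_inv := by
        rintro (⟨⟨i, hi⟩, _ | _⟩ | ⟨i, hi⟩)
        · simp [hi]
        · simp [hσ i, hi, hi.le]
        · simp [hi]
      right_inv := fun i => by
        dsimp only
        split_ifs <;> simp [hσ i] }
  refine ⟨_, _, e, ?_⟩
  rintro (⟨⟨i, hi⟩, _ | _⟩ | ⟨i, hi⟩)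
  · rfl
  · exact hσ i
  · exact hi

theorem DirectSum.IsInternal.comp_equiv {R M ι ι' : Type*} [Ring R] [AddCommGroup M] [Module R M]
    [DecidableEq ι] [DecidableEq ι'] {A : ι → Submodule R M} (h : DirectSum.IsInternal A)
    (e : ι' ≃ ι) : DirectSum.IsInternal (A ∘ e) := by
  rw [DirectSum.isInternal_submodule_iff_iSupIndep_and_iSup_eq_top] at h ⊢
  exact ⟨h.1.comp e.injective, (e.iSup_comp (g := A)).trans h.2⟩

def Equiv.sigmaPairSum {P Q : Type*} (κ : P → Type w) (μ : Q → Type w) :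
    (Σ j, Sum.elim (fun x : P × Bool => κ x.1) μ j) ≃ ((Σ s, κ s) × Bool) ⊕ Σ l, μ l where
  toFun
    | ⟨.inl (s, β), k⟩ => .inl (⟨s, k⟩, β)
    | ⟨.inr l, k⟩ => .inr ⟨l, k⟩
  invFun
    | .inl (⟨s, k⟩, β) => ⟨.inl (s, β), k⟩
    | .inr ⟨l, k⟩ => ⟨.inr l, k⟩
  left_inv := by rintro ⟨⟨s, β⟩ | l, k⟩ <;> rfl
  right_inv := by rintro (⟨⟨s, k⟩, β⟩ | ⟨l, k⟩) <;> rfl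

namespace LinearMap.BilinForm

variable {F V : Type*} [Field F] [AddCommGroup V] [Module F V] {B : LinearMap.BilinForm F V}

theorem separatingLeft_domRestrict₁₂_of_iSup_eq_top {ι : Type*} {W : ι → Submodule F V}
    {ρ : ι → ι} (hB : B.SeparatingLeft) (hW : ⨆ j, W j = ⊤)
    (horth : ∀ j j', j' ≠ ρ j → ∀ x ∈ W j, ∀ y ∈ W j', B x y = 0) (j : ι) :
    (B.domRestrict₁₂ (W j) (W (ρ j))).SeparatingLeft := by
  intro x hx
  have hker : ⨆ j', W j' ≤ LinearMap.ker (B x) := iSup_le fun j' y hy => by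
    by_cases h : j' = ρ j
    · subst h
      exact hx ⟨y, hy⟩
    · exact horth j j' h x x.2 y hy
  exact Subtype.ext <| hB x fun w => hker (hW ▸ Submodule.mem_top)

theorem IsSymm.separatingRight_domRestrict₁₂ (hB : B.IsSymm) {X Y : Submodule F V}
    (h : (B.domRestrict₁₂ Y X).SeparatingLeft) : (B.domRestrict₁₂ X Y).SeparatingRight :=
  fun y hy => h y fun x => by
    have hxy := hy x
    rw [domRestrict₁₂_apply] at hxy ⊢
    rwa [hB.eq]

theorem exists_dual_basis {X Y : Submodule F V} [FiniteDimensional F X]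
    (h : (B.domRestrict₁₂ X Y).Nondegenerate) {κ : Type*} [Finite κ] [DecidableEq κ]
    (u : Basis κ F X) : ∃ v : Basis κ F Y, ∀ k k', B (u k) (v k') = if k = k' then 1 else 0 := by
  let p := B.domRestrict₁₂ X Y
  have : p.IsPerfPair := .of_injective (ker_eq_bot.1 (separatingLeft_iff_ker_eq_bot.1 h.1))
    (ker_eq_bot.1 (separatingRight_iff_flip_ker_eq_bot.1 h.2))
  refine ⟨u.dualBasis.map p.flip.toPerfPair.symm, fun k k' => ?_⟩
  calc B (u k) (p.flip.toPerfPair.symm (u.dualBasis k'))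
      = p (u k) (p.flip.toPerfPair.symm (u.dualBasis k')) := rfl
    _ = u.dualBasis k' (u k) := p.apply_toPerfPair_flip _ _
    _ = if k = k' then 1 else 0 := u.dualBasis_apply_self k' k

theorem exists_orthogonal_basis_apply_self_ne_zero [FiniteDimensional F V] (h2 : (2 : F) ≠ 0)
    (hB : B.IsSymm) (hB' : B.SeparatingLeft) :
    ∃ z : Basis (Fin (finrank F V)) F V, B.IsOrthoᵢ z ∧ ∀ k, B (z k) (z k) ≠ 0 := by
  have : Invertible (2 : F) := invertibleOfNonzero h2
  obtain ⟨z, hz⟩ := exists_orthogonal_basis (isSymm_iff.1 hB)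
  exact ⟨z, hz, hz.not_isOrtho_basis_self_of_separatingLeft hB'⟩

section Blocks

variable {P Q : Type*} [DecidableEq ((P × Bool) ⊕ Q)] {W : (P × Bool) ⊕ Q → Submodule F V}

theorem exists_isHyperbolicOrthogonal_basis_of_blocks (hB : B.IsSymm)
    (hW : DirectSum.IsInternal W)
    (horth : ∀ j j', j' ≠ pairPartner j → ∀ x ∈ W j, ∀ y ∈ W j', B x y = 0)
    {κ : P → Type w} {μ : Q → Type w} [∀ s, DecidableEq (κ s)]
    (u : ∀ s, Basis (κ s) F (W (.inl (s, false)))) (v : ∀ s, Basis (κ s) F (W (.inl (s, true))))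
    (huv : ∀ s k k', B (u s k) (v s k') = if k = k' then 1 else 0)
    (z : ∀ l, Basis (μ l) F (W (.inr l))) (hz : ∀ l, (B.restrict (W (.inr l))).IsOrthoᵢ (z l))
    (hzz : ∀ l k, B (z l k) (z l k) ≠ 0) :
    ∃ b : Basis (((Σ s, κ s) × Bool) ⊕ Σ l, μ l) F V,
      (∀ p, ∃ j, b p ∈ W j) ∧ IsHyperbolicOrthogonal B b := by
  let c : ∀ j, Basis (Sum.elim (fun x : P × Bool => κ x.1) μ j) F (W j)
    | .inl (s, false) => u s
    | .inl (s, true) => v s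
    | .inr l => z l
  let b := (hW.collectedBasis c).reindex (Equiv.sigmaPairSum κ μ)
  have hu : ∀ s k, b (.inl (⟨s, k⟩, false)) = u s k := fun s k => by
    rw [Basis.reindex_apply, hW.collectedBasis_coe]; rfl
  have hv : ∀ s k, b (.inl (⟨s, k⟩, true)) = v s k := fun s k => by
    rw [Basis.reindex_apply, hW.collectedBasis_coe]; rfl
  have hz' : ∀ l k, b (.inr ⟨l, k⟩) = z l k := fun l k => by
    rw [Basis.reindex_apply, hW.collectedBasis_coe]; rfl
  let block : ((Σ s, κ s) × Bool) ⊕ (Σ l, μ l) → (P × Bool) ⊕ Q :=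
    Sum.map (Prod.map Sigma.fst _root_.id) Sigma.fst
  have hmem : ∀ p, b p ∈ W (block p) := by
    rintro (⟨⟨s, k⟩, _ | _⟩ | ⟨l, k⟩)
    · rw [hu]; exact (u s k).2
    · rw [hv]; exact (v s k).2
    · rw [hz']; exact (z l k).2
  refine ⟨b, fun p => ⟨_, hmem p⟩, fun l => ?_, fun s => ?_, fun p p' hp => ?_⟩
  · rcases l with ⟨l, k⟩
    rw [hz']
    exact hzz l k
  · rcases s with ⟨s, k⟩
    rw [hu, hv, huv, if_pos rfl]
  · by_cases hblock : block p' = pairPartner (block p)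
    · rcases p with ⟨⟨s, k⟩, _ | _⟩ | ⟨l, k⟩ <;> rcases p' with ⟨⟨s', k'⟩, _ | _⟩ | ⟨l', k'⟩ <;>
        simp only [block, pairPartner, Sum.map_inl, Sum.map_inr, Prod.map_apply, id_eq,
          Bool.not_false, Bool.not_true, Sum.inl.injEq, Sum.inr.injEq, Prod.mk.injEq, reduceCtorEq,
          Bool.false_eq_true, Bool.true_eq_false, and_false, and_true] at hblock <;>
        subst hblock <;>
        simp only [pairPartner, Sum.map_inl, Sum.map_inr, Prod.map_apply, id_eq, Bool.not_false,
          Bool.not_true, ne_eq, Sum.inl.injEq, Sum.inr.injEq, Prod.mk.injEq, Sigma.mk.injEq,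
          heq_eq_eq, true_and, and_true] at hp
      · rw [hu, hv, huv, if_neg (Ne.symm hp)]
      · rw [hv, hu, hB.eq, huv, if_neg hp]
      · rw [hz', hz']
        exact hz l' (Ne.symm hp)
    · exact horth _ _ hblock _ (hmem p) _ (hmem p')

theorem exists_isHyperbolicOrthogonal_basis [FiniteDimensional F V] (h2 : (2 : F) ≠ 0)
    (hB : B.IsSymm) (hB' : B.SeparatingLeft) (hW : DirectSum.IsInternal W)
    (horth : ∀ j j', j' ≠ pairPartner j → ∀ x ∈ W j, ∀ y ∈ W j', B x y = 0) :
    ∃ (r q : ℕ) (b : Basis ((Fin r × Bool) ⊕ Fin q) F V),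
      (∀ p, ∃ j, b p ∈ W j) ∧ IsHyperbolicOrthogonal B b := by
  have hsep := separatingLeft_domRestrict₁₂_of_iSup_eq_top hB' hW.submodule_iSup_eq_top horth
  have hpair (s : P) :
      (B.domRestrict₁₂ (W (.inl (s, false))) (W (.inl (s, true)))).Nondegenerate :=
    ⟨hsep (.inl (s, false)), hB.separatingRight_domRestrict₁₂ (hsep (.inl (s, true)))⟩
  choose v hv using fun s => exists_dual_basis (hpair s) (finBasis F (W (.inl (s, false))))
  choose z hz hzz using fun l => exists_orthogonal_basis_apply_self_ne_zero h2
    (B := B.restrict (W (.inr l))) ⟨fun x y => hB.eq x y⟩ (hsep (.inr l))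
  obtain ⟨b, hbW, hb⟩ := exists_isHyperbolicOrthogonal_basis_of_blocks hB hW horth _ v hv z hz hzz
  obtain ⟨r, q, b', hb'b, hb'⟩ := hb.exists_basis_fin
  refine ⟨r, q, b', fun p => ?_, hb'⟩
  obtain ⟨p₀, hp₀⟩ := hb'b p
  rw [hp₀]
  exact hbW p₀

end Blocks

end LinearMap.BilinForm

/-- Lemma 2.2: a finite-dimensional vector space with a nondegenerate symmetric
bilinear form (char F ≠ 2), which is a direct sum of subspaces each pairing
nontrivially with exactly one other, has a basis
`{u_1,v_1,…,u_r,v_r,z_1,…,z_q}` of elements of the given subspaces with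
`⟨z_l,z_l⟩ ≠ 0`, `⟨u_i,v_i⟩ = 1` and all other inner products zero. -/
theorem symmetric_homogeneous_basis
    (F : Type*) [Field F] (hchar : (2 : F) ≠ 0)
    (V : Type*) [AddCommGroup V] [Module F V] [FiniteDimensional F V]
    (B : LinearMap.BilinForm F V)
    (hsymm : ∀ v w : V, B v w = B w v)
    (hnd : ∀ v : V, (∀ w : V, B v w = 0) → v = 0)
    (I : Type*) [DecidableEq I] (Vi : I → Submodule F V)
    (hint : DirectSum.IsInternal Vi)
    (huniq : ∀ i : I, ∃! j : I, ∃ a ∈ Vi i, ∃ b ∈ Vi j, B a b ≠ 0) :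
    ∃ (r q : ℕ) (b : Module.Basis ((Fin r × Bool) ⊕ Fin q) F V),
      (∀ p : (Fin r × Bool) ⊕ Fin q, ∃ i : I, b p ∈ Vi i) ∧
      (∀ l : Fin q, B (b (Sum.inr l)) (b (Sum.inr l)) ≠ 0) ∧
      (∀ i : Fin r, B (b (Sum.inl (i, false))) (b (Sum.inl (i, true))) = 1) ∧
      (∀ p p' : (Fin r × Bool) ⊕ Fin q,
        ¬(p = p' ∧ ∃ l : Fin q, p = Sum.inr l) →
        ¬(∃ i : Fin r, (p = Sum.inl (i, false) ∧ p' = Sum.inl (i, true)) ∨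
            (p = Sum.inl (i, true) ∧ p' = Sum.inl (i, false))) →
        B (b p) (b p') = 0) := by
  classical
  choose σ hσ hσ_unique using huniq
  have horth (i j : I) (hj : j ≠ σ i) : ∀ x ∈ Vi i, ∀ y ∈ Vi j, B x y = 0 :=
    fun x hx y hy => by_contra fun h => hj (hσ_unique i j ⟨x, hx, y, hy, h⟩)
  have hinv : Function.Involutive σ := fun i => by
    obtain ⟨x, hx, y, hy, hxy⟩ := hσ i
    exact (hσ_unique (σ i) i ⟨y, hy, x, hx, by rwa [hsymm]⟩).symm
  obtain ⟨P, Q, e, he⟩ := hinv.exists_equiv_pairPartner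
  obtain ⟨r, q, b, hbW, hb⟩ := LinearMap.BilinForm.exists_isHyperbolicOrthogonal_basis hchar
    ⟨hsymm⟩ hnd (hint.comp_equiv e) fun j j' hj => horth _ _ (by rwa [he, e.injective.ne_iff])
  refine ⟨r, q, b, fun p => ?_, hb.apply_self_ne_zero, hb.apply_pair_eq_one,
    fun p p' h₁ h₂ => hb.apply_eq_zero p p' (ne_pairPartner_of h₁ h₂)⟩
  obtain ⟨j, hj⟩ := hbW p
  exact ⟨e j, hj⟩
end

section
/- Let H_n be the Heisenberg Lie algebra of dimension n = 2k+1 over a field F, with one-dimensional center spanned by z. For any group grading of H_n by an abelian group G, there is a basis B = {z, u_1, u_1', …, u_k, u_k'} of H_n consisting of homogeneous elements such that [u_i, u_i'] = z for all i and all other brackets among elements of B vanish. -/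
/-!
The bracket of `L` is `⁅x, y⁆ = ω x y • z` for the alternating form `ω` given by the `z`-coordinate
of the bracket, and the kernel of `ω` is the centre `F ∙ z`. The element `z` is homogeneous, say of
degree `g₀`: otherwise every bracket of homogeneous elements, lying both in a graded piece and on
the line `F ∙ z`, vanishes, so all components of `z` are central, hence on that line, hence zero.
Consequently `ω` pairs `L_g` only with `L_{g₀ - g}`. In a graded subspace `S ⊇ F ∙ z` on which `ω`
is nondegenerate modulo `F ∙ z`, a homogeneous `u ∈ S \ F ∙ z` therefore has a homogeneous partner
`v ∈ S` with `ω u v = 1`, and `S ∩ ker (ω u) ∩ ker (ω v)` has the same properties, so induction on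
the dimension, starting from `S = L`, yields the basis.
-/

/-- For a pair of indices of the Heisenberg basis, the predicate of being a
"symplectic pair" `(u_i, u_i')` or `(u_i', u_i)`. -/
def HeisPair {k : ℕ} (p q : (Fin k × Bool) ⊕ Unit) : Prop :=
  ∃ i : Fin k, (p = Sum.inl (i, false) ∧ q = Sum.inl (i, true)) ∨
    (p = Sum.inl (i, true) ∧ q = Sum.inl (i, false))

open Module Submodule DirectSum
open LinearMap (ker)

section Symplectic

variable {F V : Type*} [Field F] [AddCommGroup V] [Module F V]

structure IsSymplecticFamily (ω : V →ₗ[F] V →ₗ[F] F) {m : ℕ} (e : Fin m → Bool → V) : Prop where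
  apply_false_true : ∀ i, ω (e i false) (e i true) = 1
  apply_eq_zero : ∀ i j s t, i ≠ j ∨ s = t → ω (e i s) (e j t) = 0

def IsNondegenerateModKer (ω : V →ₗ[F] V →ₗ[F] F) (S : Submodule F V) : Prop :=
  ∀ x ∈ S, (∀ y ∈ S, ω x y = 0) → ω x = 0

variable {ω : V →ₗ[F] V →ₗ[F] F} {u v : V}

theorem IsSymplecticFamily.cons (hω : ω.IsAlt) {m : ℕ} {e : Fin m → Bool → V}
    (he : IsSymplecticFamily ω e) (huv : ω u v = 1) (hu : ∀ j t, ω u (e j t) = 0)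
    (hv : ∀ j t, ω v (e j t) = 0) :
    IsSymplecticFamily ω (Fin.cons (fun s => cond s v u) e : Fin (m + 1) → Bool → V) where
  apply_false_true i := by
    cases i using Fin.cases with
    | zero => simpa using huv
    | succ j => simpa using he.apply_false_true j
  apply_eq_zero i j s t hij := by
    cases i using Fin.cases <;> cases j using Fin.cases
    case zero.zero =>
      obtain rfl : s = t := hij.resolve_left (not_not.mpr rfl)
      exact hω _
    case zero.succ j => cases s <;> simp [hu, hv]
    case succ.zero i => rw [← hω.neg]; cases t <;> simp [hu, hv]
    case succ.succ i j => simpa using he.apply_eq_zero i j s t (by simpa using hij)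

namespace LinearMap.IsAlt

variable (hω : ω.IsAlt) (huv : ω u v = 1)
include hω huv

theorem apply_smul_add_smul (s t : F) : ω u (s • u + t • v) = t ∧ ω v (s • u + t • v) = -s := by
  simp [hω.self_eq_zero, huv, ← hω.neg u v]

theorem linearIndependent_pair : LinearIndependent F ![u, v] :=
  LinearIndependent.pair_iff.mpr fun s t hst => by
    have := hω.apply_smul_add_smul huv s t
    simp only [hst, map_zero] at this
    exact ⟨neg_eq_zero.mp this.2.symm, this.1.symm⟩

theorem disjoint_span_pair_ker_inf_ker : Disjoint (span F {u, v}) (ker (ω u) ⊓ ker (ω v)) := by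
  refine Submodule.disjoint_def.mpr fun x hx hker => ?_
  obtain ⟨s, t, rfl⟩ := mem_span_pair.mp hx
  obtain ⟨hu, hv⟩ := hω.apply_smul_add_smul huv s t
  rw [LinearMap.mem_ker.mp hker.1] at hu
  rw [LinearMap.mem_ker.mp hker.2, zero_eq_neg] at hv
  simp [← hu, hv]

variable {S : Submodule F V} (hu : u ∈ S) (hv : v ∈ S)
include hu hv

theorem le_span_pair_sup_inf_ker_inf_ker :
    S ≤ span F {u, v} ⊔ (S ⊓ ker (ω u) ⊓ ker (ω v)) := by
  intro w hw
  have hsplit : w = (ω w v • u + ω u w • v) + (w - ω w v • u - ω u w • v) := by abel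
  rw [hsplit]
  refine add_mem_sup (add_mem (smul_mem _ _ (subset_span (by simp)))
    (smul_mem _ _ (subset_span (by simp)))) ⟨⟨?_, ?_⟩, ?_⟩
  · exact sub_mem (sub_mem hw (smul_mem _ _ hu)) (smul_mem _ _ hv)
  · simp [hω.self_eq_zero, huv]
  · simp [hω.self_eq_zero, ← hω.neg u v, huv, ← hω.neg w v]

theorem span_pair_sup_inf_ker_inf_ker : span F {u, v} ⊔ (S ⊓ ker (ω u) ⊓ ker (ω v)) = S :=
  le_antisymm (sup_le (span_le.mpr (Set.insert_subset hu (Set.singleton_subset_iff.mpr hv)))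
    (inf_le_left.trans inf_le_left)) (hω.le_span_pair_sup_inf_ker_inf_ker huv hu hv)

theorem finrank_inf_ker_inf_ker_add_two [FiniteDimensional F V] :
    finrank F ↥(S ⊓ ker (ω u) ⊓ ker (ω v)) + 2 = finrank F S := by
  have hdisj : span F {u, v} ⊓ (S ⊓ ker (ω u) ⊓ ker (ω v)) = ⊥ :=
    (hω.disjoint_span_pair_ker_inf_ker huv).mono_right
      (le_inf (inf_le_left.trans inf_le_right) inf_le_right) |>.eq_bot
  have hpair : finrank F (span F {u, v}) = 2 := by
    rw [← Matrix.range_cons_cons_empty u v ![],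
      finrank_span_eq_card (hω.linearIndependent_pair huv), Fintype.card_fin]
  have := finrank_sup_add_finrank_inf_eq (span F {u, v}) (S ⊓ ker (ω u) ⊓ ker (ω v))
  rw [hω.span_pair_sup_inf_ker_inf_ker huv hu hv, hdisj, finrank_bot, hpair] at this
  omega

end LinearMap.IsAlt

theorem IsNondegenerateModKer.inf_ker_inf_ker (hω : ω.IsAlt) {S : Submodule F V}
    (hS : IsNondegenerateModKer ω S) (hu : u ∈ S) (hv : v ∈ S) (huv : ω u v = 1) :
    IsNondegenerateModKer ω (S ⊓ ker (ω u) ⊓ ker (ω v)) := by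
  rintro x ⟨⟨hxS, hxu⟩, hxv⟩ hx
  refine hS x hxS fun y hy => ?_
  have hle : span F {u, v} ⊔ (S ⊓ ker (ω u) ⊓ ker (ω v)) ≤ ker (ω x) := by
    refine sup_le (span_le.mpr (Set.insert_subset ?_ (Set.singleton_subset_iff.mpr ?_))) hx
    · exact hω.eq_iff.mp hxu
    · exact hω.eq_iff.mp hxv
  exact hle (hω.le_span_pair_sup_inf_ker_inf_ker huv hu hv hy)

end Symplectic

section Graded

variable {F V G : Type*} [Field F] [AddCommGroup V] [Module F V] [DecidableEq G]
  {Lg : G → Submodule F V} [Decomposition Lg]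

theorem Submodule.IsHomogeneous.exists_isHomogeneousElem_notMem {S T : Submodule F V}
    (hS : S.IsHomogeneous Lg) (hST : ¬S ≤ T) :
    ∃ x ∈ S, SetLike.IsHomogeneousElem Lg x ∧ x ∉ T := by
  classical
  contrapose! hST
  intro x hx
  rw [← sum_support_decompose Lg x]
  exact sum_mem fun i _ => hST _ (hS i hx) ⟨i, (decompose Lg x i).2⟩

variable [AddCommGroup G]

def IsGradedForm (Lg : G → Submodule F V) (ω : V →ₗ[F] V →ₗ[F] F) (g₀ : G) : Prop :=
  ∀ ⦃g h : G⦄ ⦃x y : V⦄, x ∈ Lg g → y ∈ Lg h → g + h ≠ g₀ → ω x y = 0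

namespace IsGradedForm

variable {ω : V →ₗ[F] V →ₗ[F] F} {g₀ h : G} {w : V} (hωg : IsGradedForm Lg ω g₀)
include hωg

theorem apply_eq_apply_decompose (hw : w ∈ Lg h) (x : V) :
    ω w x = ω w (decompose Lg x (g₀ - h)) := by
  classical
  conv_lhs => rw [← sum_support_decompose Lg x]
  rw [map_sum]
  refine Finset.sum_eq_single _ (fun g _ hg => hωg hw (decompose Lg x g).2 ?_) fun hg => ?_
  · exact fun h' => hg (eq_sub_of_add_eq' h')
  · rw [DFinsupp.notMem_support_iff.mp hg, ZeroMemClass.coe_zero, map_zero]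

theorem isHomogeneous_inf_ker {S : Submodule F V} (hS : S.IsHomogeneous Lg) (hw : w ∈ Lg h) :
    (S ⊓ ker (ω w)).IsHomogeneous Lg := by
  rintro i x ⟨hxS, hxw⟩
  refine ⟨hS i hxS, ?_⟩
  by_cases hi : h + i = g₀
  · obtain rfl : i = g₀ - h := eq_sub_of_add_eq' hi
    rw [SetLike.mem_coe, LinearMap.mem_ker, ← hωg.apply_eq_apply_decompose hw]
    exact hxw
  · exact hωg hw (decompose Lg x i).2 hi

theorem exists_mem_apply_eq_one {S : Submodule F V} (hS : S.IsHomogeneous Lg) (hw : w ∈ Lg h)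
    {y : V} (hy : y ∈ S) (hwy : ω w y ≠ 0) : ∃ v ∈ S, v ∈ Lg (g₀ - h) ∧ ω w v = 1 := by
  set y' : V := (decompose Lg y (g₀ - h) : V)
  have hwy' : ω w y' ≠ 0 := hωg.apply_eq_apply_decompose hw y ▸ hwy
  refine ⟨(ω w y')⁻¹ • y', smul_mem _ _ (hS _ hy), smul_mem _ _ (decompose Lg y _).2, ?_⟩
  rw [map_smul, smul_eq_mul, inv_mul_cancel₀ hwy']

theorem exists_isSymplecticFamily [FiniteDimensional F V] (hω : ω.IsAlt) (m : ℕ)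
    {S : Submodule F V} (hS : S.IsHomogeneous Lg) (hSω : IsNondegenerateModKer ω S)
    (hkerS : ker ω ≤ S) (hrank : finrank F S = finrank F (ker ω) + 2 * m) :
    ∃ e : Fin m → Bool → V, IsSymplecticFamily ω e ∧
      (∀ i s, e i s ∈ S ∧ SetLike.IsHomogeneousElem Lg (e i s)) ∧
      S ≤ ker ω ⊔ span F (Set.range (Function.uncurry e)) := by
  induction m generalizing S with
  | zero =>
    refine ⟨Fin.elim0, ⟨fun i => i.elim0, fun i => i.elim0⟩, fun i => i.elim0, le_sup_of_le_left ?_⟩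
    exact (eq_of_le_of_finrank_le hkerS (by omega)).ge
  | succ m ih =>
    obtain ⟨u, huS, ⟨h, hu⟩, huker⟩ := hS.exists_isHomogeneousElem_notMem (T := ker ω)
      fun hle => by have := finrank_mono hle; omega
    obtain ⟨y, hyS, huy⟩ : ∃ y ∈ S, ω u y ≠ 0 := by
      by_contra! hall
      exact huker (hSω u huS hall)
    obtain ⟨v, hvS, hv, huv⟩ := hωg.exists_mem_apply_eq_one hS hu hyS huy
    have hkerS' : ker ω ≤ S ⊓ ker (ω u) ⊓ ker (ω v) := fun r hr =>
      ⟨⟨hkerS hr, hω.eq_iff.mp (LinearMap.congr_fun hr u)⟩,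
        hω.eq_iff.mp (LinearMap.congr_fun hr v)⟩
    obtain ⟨e, he, hemem, hspan⟩ :=
      ih (hωg.isHomogeneous_inf_ker (hωg.isHomogeneous_inf_ker hS hu) hv)
        (hSω.inf_ker_inf_ker hω huS hvS huv) hkerS'
        (by have := hω.finrank_inf_ker_inf_ker_add_two huv huS hvS; omega)
    refine ⟨Fin.cons (fun s => cond s v u) e,
      he.cons hω huv (fun j t => (hemem j t).1.1.2) (fun j t => (hemem j t).1.2), ?_, ?_⟩
    · intro i s
      cases i using Fin.cases with
      | zero => cases s; exacts [⟨huS, h, hu⟩, ⟨hvS, _, hv⟩]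
      | succ j => simpa using ⟨(hemem j s).1.1.1, (hemem j s).2⟩
    · calc S ≤ span F {u, v} ⊔ (S ⊓ ker (ω u) ⊓ ker (ω v)) :=
            hω.le_span_pair_sup_inf_ker_inf_ker huv huS hvS
        _ ≤ span F {u, v} ⊔ (ker ω ⊔ span F (Set.range (Function.uncurry e))) :=
            sup_le_sup_left hspan _
        _ ≤ _ := by
          refine sup_le (le_sup_of_le_right (span_mono ?_)) (sup_le_sup_left (span_mono ?_) _)
          · rintro _ (rfl | rfl)
            exacts [⟨(0, false), rfl⟩, ⟨(0, true), rfl⟩]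
          · rintro _ ⟨⟨j, s⟩, rfl⟩
            exact ⟨(j.succ, s), by simp⟩

end IsGradedForm

end Graded

section GradedLie

variable {F L G : Type*} [Field F] [LieRing L] [LieAlgebra F L] [DecidableEq G]
  {Lg : G → Submodule F L} [Decomposition Lg] {ω : L →ₗ[F] L →ₗ[F] F} {z : L}

theorem isHomogeneousElem_of_lie_eq_smul [Add G]
    (hgr : ∀ (g h : G) (x y : L), x ∈ Lg g → y ∈ Lg h → ⁅x, y⁆ ∈ Lg (g + h)) (hz : z ≠ 0)
    (hlie : ∀ x y, ⁅x, y⁆ = ω x y • z) (hker : ker ω ≤ F ∙ z) :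
    SetLike.IsHomogeneousElem Lg z := by
  classical
  by_contra hzh
  have hline : ∀ {g x}, x ∈ Lg g → x ∈ F ∙ z → x = 0 := fun hx hxz =>
    disjoint_def.mp (disjoint_span_singleton.mpr fun hzg => (hzh ⟨_, hzg⟩).elim) _ hx hxz
  have hhom : ∀ {g x}, x ∈ Lg g → ω x = 0 := by
    intro g x hx
    ext y
    induction y using Decomposition.inductionOn Lg with
    | zero => simp
    | homogeneous y =>
      have h0 := hline (hgr _ _ _ _ hx y.2) (hlie x y ▸ smul_mem _ _ (mem_span_singleton_self z))
      rw [hlie] at h0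
      simpa [hz] using h0
    | add y y' hy hy' => simp [hy, hy']
  apply hz
  rw [← sum_support_decompose Lg z]
  exact Finset.sum_eq_zero fun g _ => hline (decompose Lg z g).2 (hker (hhom (decompose Lg z g).2))

theorem isGradedForm_of_lie_eq_smul [AddCommGroup G]
    (hgr : ∀ (g h : G) (x y : L), x ∈ Lg g → y ∈ Lg h → ⁅x, y⁆ ∈ Lg (g + h)) (hz : z ≠ 0)
    (hlie : ∀ x y, ⁅x, y⁆ = ω x y • z) {g₀ : G} (hg₀ : z ∈ Lg g₀) : IsGradedForm Lg ω g₀ := by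
  intro g h x y hx hy hne
  have hmem := hgr _ _ _ _ hx hy
  rw [hlie] at hmem
  have h0 : ω x y • z = 0 := by
    rw [← decompose_of_mem_same Lg (smul_mem _ (ω x y) hg₀), decompose_of_mem_ne Lg hmem hne]
  exact (smul_eq_zero.mp h0).resolve_right hz

end GradedLie

theorem HeisPair.not_inr_left {k : ℕ} {q : (Fin k × Bool) ⊕ Unit} : ¬HeisPair (.inr ()) q := by
  rintro ⟨i, ⟨h, -⟩ | ⟨h, -⟩⟩ <;> cases h

theorem HeisPair.eq_inl_false {k : ℕ} {p : (Fin k × Bool) ⊕ Unit} {i : Fin k}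
    (h : HeisPair p (.inl (i, true))) : p = .inl (i, false) := by
  obtain ⟨j, ⟨rfl, h⟩ | ⟨-, h⟩⟩ := h <;> simp_all

theorem HeisPair.eq_inl_true {k : ℕ} {q : (Fin k × Bool) ⊕ Unit} {i : Fin k}
    (h : HeisPair (.inl (i, false)) q) : q = .inl (i, true) := by
  obtain ⟨j, ⟨h, rfl⟩ | ⟨h, -⟩⟩ := h <;> simp_all

theorem heisPair_inl_inl {k : ℕ} {i : Fin k} {s t : Bool} (h : s ≠ t) :
    HeisPair (.inl (i, s)) (.inl (i, t)) := by
  cases s <;> cases t <;> first | exact absurd rfl h | exact ⟨i, by simp⟩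

section HeisenbergBasis

variable {F L : Type*} [Field F] [LieRing L] [LieAlgebra F L] {k : ℕ}
  (b : Basis ((Fin k × Bool) ⊕ Unit) F L)

noncomputable def heisenbergForm : L →ₗ[F] L →ₗ[F] F :=
  (LieModule.toEnd F L L : L →ₗ[F] Module.End F L).compr₂ (b.coord (.inr ()))

@[simp]
theorem heisenbergForm_apply (x y : L) : heisenbergForm b x y = b.repr ⁅x, y⁆ (.inr ()) :=
  rfl

theorem isAlt_heisenbergForm : (heisenbergForm b).IsAlt := fun x => by simp

variable {b}

theorem heisenbergForm_basis_inr
    (hz : ∀ p q : (Fin k × Bool) ⊕ Unit, ¬HeisPair p q → ⁅b p, b q⁆ = 0) :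
    heisenbergForm b (b (.inr ())) = 0 :=
  b.ext fun q => by simp [hz _ q HeisPair.not_inr_left]

variable (hbr : ∀ i : Fin k, ⁅b (.inl (i, false)), b (.inl (i, true))⁆ = b (.inr ()))
  (hz : ∀ p q : (Fin k × Bool) ⊕ Unit, ¬HeisPair p q → ⁅b p, b q⁆ = 0)
include hbr hz

theorem lie_basis_mem_span_singleton (p q : (Fin k × Bool) ⊕ Unit) :
    ⁅b p, b q⁆ ∈ F ∙ b (.inr ()) := by
  by_cases hpq : HeisPair p q
  · obtain ⟨i, ⟨rfl, rfl⟩ | ⟨rfl, rfl⟩⟩ := hpq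
    · exact hbr i ▸ mem_span_singleton_self _
    · rw [← lie_skew, hbr i]
      exact neg_mem (mem_span_singleton_self _)
  · exact hz p q hpq ▸ zero_mem _

theorem lie_eq_heisenbergForm_smul (x y : L) : ⁅x, y⁆ = heisenbergForm b x y • b (.inr ()) := by
  suffices (LieModule.toEnd F L L : L →ₗ[F] Module.End F L) =
      (heisenbergForm b).compr₂ (LinearMap.toSpanSingleton F L (b (.inr ()))) from
    LinearMap.congr_fun₂ this x y
  refine b.ext fun p => b.ext fun q => ?_
  obtain ⟨a, ha⟩ := mem_span_singleton.mp (lie_basis_mem_span_singleton hbr hz p q)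
  simp [← ha]

theorem heisenbergForm_apply_basis_inl_true (x : L) (i : Fin k) :
    heisenbergForm b x (b (.inl (i, true))) = b.repr x (.inl (i, false)) := by
  suffices (heisenbergForm b).flip (b (.inl (i, true))) = b.coord (.inl (i, false)) from
    LinearMap.congr_fun this x
  refine b.ext fun p => ?_
  by_cases hp : p = .inl (i, false)
  · subst hp
    simp [hbr]
  · simp [hz p _ (mt HeisPair.eq_inl_false hp), hp]

theorem heisenbergForm_basis_inl_false_apply (x : L) (i : Fin k) :
    heisenbergForm b (b (.inl (i, false))) x = b.repr x (.inl (i, true)) := by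
  suffices heisenbergForm b (b (.inl (i, false))) = b.coord (.inl (i, true)) from
    LinearMap.congr_fun this x
  refine b.ext fun q => ?_
  by_cases hq : q = .inl (i, true)
  · subst hq
    simp [hbr]
  · simp [hz _ q (mt HeisPair.eq_inl_true hq), Ne.symm hq]

theorem ker_heisenbergForm : ker (heisenbergForm b) = F ∙ b (.inr ()) := by
  refine le_antisymm (fun x hx => ?_)
    ((span_singleton_le_iff_mem _ _).mpr (heisenbergForm_basis_inr hz))
  have hx' : ∀ y, heisenbergForm b x y = 0 := LinearMap.congr_fun hx
  refine mem_span_singleton.mpr ⟨b.repr x (.inr ()), b.ext_elem fun p => ?_⟩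
  rcases p with ⟨i, _ | _⟩ | ⟨⟩
  · simp [← heisenbergForm_apply_basis_inl_true hbr hz x, hx']
  · rw [← heisenbergForm_basis_inl_false_apply hbr hz x, ← (isAlt_heisenbergForm b).neg, hx']
    simp
  · simp

end HeisenbergBasis

theorem lie_sumElim_eq_zero_of_not_heisPair {F L : Type*} [Field F] [LieRing L] [LieAlgebra F L]
    {ω : L →ₗ[F] L →ₗ[F] F} {z : L} (hω : ω.IsAlt) (hlie : ∀ x y, ⁅x, y⁆ = ω x y • z)
    (hωz : ω z = 0) {k : ℕ} {e : Fin k → Bool → L} (he : IsSymplecticFamily ω e)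
    {p q : (Fin k × Bool) ⊕ Unit} (hpq : ¬HeisPair p q) :
    ⁅Sum.elim (Function.uncurry e) (fun _ => z) p,
      Sum.elim (Function.uncurry e) (fun _ => z) q⁆ = 0 := by
  rw [hlie]
  rcases p with ⟨i, s⟩ | ⟨⟩ <;> rcases q with ⟨j, t⟩ | ⟨⟩
  · refine smul_eq_zero_of_left (he.apply_eq_zero i j s t ?_) _
    by_contra! h
    obtain ⟨rfl, hst⟩ := h
    exact hpq (heisPair_inl_inl hst)
  all_goals simp [← hω.neg, hωz]

/-- Theorem 3.1 (first part): for any group grading on the Heisenberg algebra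
`H_n` (`n = 2k+1`), there is a basis `{z, u_1, u_1', …, u_k, u_k'}` of
homogeneous elements with `[u_i, u_i'] = z` and all other brackets among basis
elements zero. -/
theorem heisenberg_grading_homogeneous_basis
    (F : Type*) [Field F] (L : Type*) [LieRing L] [LieAlgebra F L] (k : ℕ)
    (b : Module.Basis ((Fin k × Bool) ⊕ Unit) F L)
    (hbr : ∀ i : Fin k, ⁅b (Sum.inl (i, false)), b (Sum.inl (i, true))⁆ = b (Sum.inr ()))
    (hz : ∀ p q : (Fin k × Bool) ⊕ Unit, ¬ HeisPair p q → ⁅b p, b q⁆ = 0)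
    (G : Type*) [AddCommGroup G] [DecidableEq G]
    (Lg : G → Submodule F L) (hint : DirectSum.IsInternal Lg)
    (hgr : ∀ (g h : G) (x y : L), x ∈ Lg g → y ∈ Lg h → ⁅x, y⁆ ∈ Lg (g + h)) :
    ∃ c : Module.Basis ((Fin k × Bool) ⊕ Unit) F L,
      c (Sum.inr ()) = b (Sum.inr ()) ∧
      (∀ p : (Fin k × Bool) ⊕ Unit, ∃ g : G, c p ∈ Lg g) ∧
      (∀ i : Fin k, ⁅c (Sum.inl (i, false)), c (Sum.inl (i, true))⁆ = b (Sum.inr ())) ∧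
      (∀ p q : (Fin k × Bool) ⊕ Unit, ¬ HeisPair p q → ⁅c p, c q⁆ = 0) := by
  let _ := hint.chooseDecomposition
  have _ := b.finiteDimensional_of_finite
  have hω := isAlt_heisenbergForm b
  have hlie := lie_eq_heisenbergForm_smul hbr hz
  have hker := ker_heisenbergForm hbr hz
  obtain ⟨g₀, hg₀⟩ := isHomogeneousElem_of_lie_eq_smul hgr (b.ne_zero _) hlie hker.le
  obtain ⟨e, he, hemem, hspan⟩ :=
    (isGradedForm_of_lie_eq_smul hgr (b.ne_zero _) hlie hg₀).exists_isSymplecticFamily hω k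
      (S := ⊤) (fun _ _ _ => trivial) (fun x _ hx => LinearMap.ext fun y => hx y trivial) le_top
      (by rw [hker, finrank_top, finrank_span_singleton (b.ne_zero _), finrank_eq_card_basis b]
          simp [Fintype.card_sum]; ring)
  set c := Sum.elim (Function.uncurry e) fun _ : Unit => b (.inr ())
  have hc : ⊤ ≤ span F (Set.range c) := by
    rwa [Set.Sum.elim_range, span_union, Set.range_const, sup_comm, ← hker]
  refine ⟨basisOfTopLeSpanOfCardEqFinrank c hc (finrank_eq_card_basis b).symm, ?_, ?_, ?_, ?_⟩
  all_goals simp only [coe_basisOfTopLeSpanOfCardEqFinrank]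
  · rfl
  · rintro (⟨i, s⟩ | ⟨⟩)
    exacts [(hemem i s).2, ⟨g₀, hg₀⟩]
  · intro i
    simp [c, hlie, he.apply_false_true]
  · exact fun p q => lie_sumElim_eq_zero_of_not_heisPair hω hlie (heisenbergForm_basis_inr hz) he
end

section
/- Let H_n be the Heisenberg algebra of dimension n = 2k+1 with basis {e_1,ê_1,…,e_k,ê_k,z} and nonzero brackets [e_i,ê_i] = z. The set T of automorphisms of H_n that are diagonal with respect to this basis, namely f(z) = λz, f(e_i) = λ_i e_i, f(ê_i) = (λ/λ_i) ê_i for nonzero scalars λ, λ_1, …, λ_k, forms a maximal torus of Aut(H_n): T is an abelian subgroup isomorphic to (F^×)^{k+1}, and any automorphism of H_n commuting with all elements of T belongs to T. -/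
/-- The automorphisms of `H_n` diagonal with respect to the standard basis:
`f z = λ • z`, `f e_i = λ_i • e_i`, `f ê_i = (λ/λ_i) • ê_i`. -/
def IsDiagHeisAut {F : Type*} [Field F] {L : Type*} [LieRing L] [LieAlgebra F L]
    {k : ℕ} (b : Module.Basis ((Fin k × Bool) ⊕ Unit) F L) (f : L ≃ₗ[F] L) : Prop :=
  ∃ (lam : F) (lamv : Fin k → F), lam ≠ 0 ∧ (∀ i, lamv i ≠ 0) ∧
    f (b (Sum.inr ())) = lam • b (Sum.inr ()) ∧
    (∀ i : Fin k, f (b (Sum.inl (i, false))) = lamv i • b (Sum.inl (i, false))) ∧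
    (∀ i : Fin k, f (b (Sum.inl (i, true))) = (lam / lamv i) • b (Sum.inl (i, true)))

/-!
A diagonal automorphism for the basis `b` is `b.diagHom c` for a weight `c : ι → Fˣ`; it
preserves the bracket exactly when `c` has the Heisenberg shape `heisWeight μ t`, so `T` is the
injective image of `(Fin k → Fˣ) × Fˣ` under a group homomorphism, hence abelian and isomorphic
to it. An automorphism commuting with `b.diagHom c` keeps `f (b p)` inside the span of the `b q`
with `c q = c p`. Given a unit `u` with `u * u ≠ 1` (here `F` is infinite), the weights
`heisWeight (Pi.mulSingle i u) 1` separate all basis vectors, so an automorphism centralizing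
`T` is diagonal, and preserving `⁅e_i, ê_i⁆ = z` puts its weight in Heisenberg shape.
-/

namespace Module.Basis

variable {ι R M : Type*} [CommRing R] [AddCommGroup M] [Module R M] (b : Basis ι R M)

noncomputable def diagHom : (ι → Rˣ) →* (M ≃ₗ[R] M) where
  toFun c := b.equiv (b.unitsSMul c) (Equiv.refl ι)
  map_one' := b.ext' fun p => by simp [equiv_apply, unitsSMul_apply]
  map_mul' c c' := b.ext' fun p => by
    simp [equiv_apply, unitsSMul_apply, Units.smul_def, smul_smul, mul_comm]

@[simp]
lemma diagHom_apply_basis (c : ι → Rˣ) (p : ι) : b.diagHom c (b p) = c p • b p := by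
  simp [diagHom, equiv_apply, unitsSMul_apply]

lemma repr_diagHom_apply (c : ι → Rˣ) (x : M) (q : ι) :
    b.repr (b.diagHom c x) q = c q • b.repr x q := by
  classical
  have h : b.coord q ∘ₗ (b.diagHom c).toLinearMap = c q • b.coord q := b.ext fun p => by
    rcases eq_or_ne p q with rfl | hpq
    · simp
    · simp [hpq]
  simpa using LinearMap.congr_fun h x

lemma diagHom_injective : Function.Injective b.diagHom := by
  intro c c' h
  funext p
  have := congr_arg (fun f : M ≃ₗ[R] M => b.repr (f (b p)) p) h
  exact Units.ext (by simpa [Units.smul_def] using this)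

lemma repr_apply_basis_eq_zero_of_commute [NoZeroDivisors R] {f : M ≃ₗ[R] M} {c : ι → Rˣ}
    (hf : Commute f (b.diagHom c)) {p q : ι} (hpq : c p ≠ c q) :
    b.repr (f (b p)) q = 0 := by
  have h := congr_arg (fun x => b.repr x q) (LinearEquiv.congr_fun hf (b p))
  simp only [LinearEquiv.mul_apply, diagHom_apply_basis, Units.smul_def, map_smul,
    repr_diagHom_apply, Finsupp.coe_smul, Pi.smul_apply, smul_eq_mul] at h
  have hne : (c p : R) - c q ≠ 0 := sub_ne_zero.2 (Units.val_injective.ne hpq)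
  exact (mul_eq_zero.1 (by linear_combination h : ((c p : R) - c q) * _ = 0)).resolve_left hne

lemma apply_basis_eq_smul_of_commute [NoZeroDivisors R] {f : M ≃ₗ[R] M} (C : Set (ι → Rˣ))
    (hsep : ∀ p q, p ≠ q → ∃ c ∈ C, c p ≠ c q) (hf : ∀ c ∈ C, Commute f (b.diagHom c))
    (p : ι) : f (b p) = b.repr (f (b p)) p • b p := by
  classical
  refine b.repr.injective (Finsupp.ext fun q => ?_)
  rcases eq_or_ne p q with rfl | hpq
  · simp
  · obtain ⟨c, hc, hcpq⟩ := hsep p q hpq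
    simp [repr_apply_basis_eq_zero_of_commute b (hf c hc) hcpq, hpq]

end Module.Basis

lemma LinearMap.map_lie_of_basis {ι R L : Type*} [CommRing R] [LieRing L] [LieAlgebra R L]
    (b : Module.Basis ι R L) (f : L →ₗ[R] L) (h : ∀ p q, f ⁅b p, b q⁆ = ⁅f (b p), f (b q)⁆)
    (x y : L) : f ⁅x, y⁆ = ⁅f x, f y⁆ := by
  have := LinearMap.ext_basis (B := (LieModule.toEnd R L L : L →ₗ[R] Module.End R L).compr₂ f)
    (B' := ((LieModule.toEnd R L L : L →ₗ[R] Module.End R L)).compl₁₂ f f) b b (by simpa using h)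
  simpa using LinearMap.congr_fun₂ this x y

section HeisenbergWeights

variable {G : Type*} [CommGroup G] {k : ℕ}

def heisWeight (μ : Fin k → G) (t : G) : (Fin k × Bool) ⊕ Unit → G
  | .inl (i, false) => μ i
  | .inl (i, true) => t * (μ i)⁻¹
  | .inr _ => t

@[simp] lemma heisWeight_inl_false (μ : Fin k → G) (t : G) (i : Fin k) :
    heisWeight μ t (.inl (i, false)) = μ i := rfl

@[simp] lemma heisWeight_inl_true (μ : Fin k → G) (t : G) (i : Fin k) :
    heisWeight μ t (.inl (i, true)) = t * (μ i)⁻¹ := rfl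

@[simp] lemma heisWeight_inr (μ : Fin k → G) (t : G) (u : Unit) :
    heisWeight μ t (.inr u) = t := rfl

def heisWeightHom : (Fin k → G) × G →* ((Fin k × Bool) ⊕ Unit → G) where
  toFun x := heisWeight x.1 x.2
  map_one' := by
    funext p
    rcases p with ⟨i, _ | _⟩ | u <;> simp
  map_mul' x y := by
    funext p
    rcases p with ⟨i, _ | _⟩ | u <;> simp [mul_mul_mul_comm, mul_comm]

@[simp] lemma heisWeightHom_apply (x : (Fin k → G) × G) :
    heisWeightHom x = heisWeight x.1 x.2 := rfl

lemma heisWeightHom_injective : Function.Injective (heisWeightHom (G := G) (k := k)) := by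
  intro x y h
  have hμ i := congr_fun h (.inl (i, false))
  have ht := congr_fun h (.inr ())
  simp only [heisWeightHom_apply, heisWeight_inl_false, heisWeight_inr] at hμ ht
  exact Prod.ext (funext hμ) ht

lemma heisWeight_mulSingle_ne {u : G} (hu : u * u ≠ 1) (i : Fin k) (e : Bool)
    (q : (Fin k × Bool) ⊕ Unit) (hq : .inl (i, e) ≠ q) :
    heisWeight (Pi.mulSingle i u) 1 (.inl (i, e)) ≠ heisWeight (Pi.mulSingle i u) 1 q := by
  have hu₁ : u ≠ 1 := by rintro rfl; simp at hu
  have hu₂ : u ≠ u⁻¹ := fun h => hu (mul_eq_one_iff_eq_inv.2 h)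
  rcases q with ⟨j, e'⟩ | ⟨⟩
  · by_cases hj : j = i
    · subst hj
      cases e <;> cases e' <;> simp_all [eq_comm]
    · cases e <;> cases e' <;> simp [hj, hu₁]
  · cases e <;> simp [hu₁]

lemma exists_heisWeightHom_ne (hG : ∃ u : G, u * u ≠ 1) (p q : (Fin k × Bool) ⊕ Unit)
    (hpq : p ≠ q) : ∃ c ∈ Set.range (heisWeightHom (G := G) (k := k)), c p ≠ c q := by
  obtain ⟨u, hu⟩ := hG
  rcases p with ⟨i, e⟩ | ⟨⟩
  · exact ⟨_, ⟨(Pi.mulSingle i u, 1), rfl⟩, heisWeight_mulSingle_ne hu i e q hpq⟩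
  · rcases q with ⟨j, e⟩ | ⟨⟩
    · exact ⟨_, ⟨(Pi.mulSingle j u, 1), rfl⟩,
        (heisWeight_mulSingle_ne hu j e _ hpq.symm).symm⟩
    · exact absurd rfl hpq

end HeisenbergWeights

lemma Units.exists_mul_self_ne_one (F : Type*) [Field F] [Infinite F] :
    ∃ u : Fˣ, u * u ≠ 1 := by
  classical
  obtain ⟨s, hs⟩ := Infinite.exists_notMem_finset ({0, 1, -1} : Finset F)
  simp only [Finset.mem_insert, Finset.mem_singleton, not_or] at hs
  refine ⟨Units.mk0 s hs.1, fun h => ?_⟩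
  have := mul_self_eq_one_iff.1 (congr_arg Units.val h)
  tauto

section Heisenberg

variable {F L : Type*} [Field F] [LieRing L] [LieAlgebra F L] {k : ℕ}
  (b : Module.Basis ((Fin k × Bool) ⊕ Unit) F L)

lemma isDiagHeisAut_of_apply_basis {f : L ≃ₗ[F] L} (a : (Fin k × Bool) ⊕ Unit → F)
    (ha : ∀ p, a p ≠ 0) (hf : ∀ p, f (b p) = a p • b p)
    (hrel : ∀ i, a (.inl (i, false)) * a (.inl (i, true)) = a (.inr ())) :
    IsDiagHeisAut b f :=
  ⟨a (.inr ()), fun i => a (.inl (i, false)), ha _, fun _ => ha _, hf _, fun _ => hf _,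
    fun i => by rw [hf, ← hrel, mul_div_cancel_left₀ _ (ha _)]⟩

lemma isDiagHeisAut_iff_mem_range {f : L ≃ₗ[F] L} :
    IsDiagHeisAut b f ↔ f ∈ (b.diagHom.comp heisWeightHom).range := by
  constructor
  · rintro ⟨t, μ, ht, hμ, hfz, hfe, hfê⟩
    refine ⟨(fun i => Units.mk0 (μ i) (hμ i), Units.mk0 t ht), (b.ext' ?_).symm⟩
    rintro (⟨i, _ | _⟩ | ⟨⟩)
    · simpa using hfe i
    · simpa [div_eq_mul_inv, Units.smul_def] using hfê i
    · simpa using hfz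
  · rintro ⟨x, rfl⟩
    refine isDiagHeisAut_of_apply_basis b (fun p => ((heisWeightHom x p : Fˣ) : F))
      (fun _ => Units.ne_zero _) (fun _ => by simp [Units.smul_def]) (fun i => ?_)
    simp [mul_left_comm]

variable {b}

lemma diagHom_heisWeightHom_map_lie
    (hbr : ∀ i : Fin k, ⁅b (Sum.inl (i, false)), b (Sum.inl (i, true))⁆ = b (Sum.inr ()))
    (hz : ∀ p q : (Fin k × Bool) ⊕ Unit, ¬ HeisPair p q → ⁅b p, b q⁆ = 0)
    (x : (Fin k → Fˣ) × Fˣ) (y z : L) :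
    b.diagHom (heisWeightHom x) ⁅y, z⁆ =
      ⁅b.diagHom (heisWeightHom x) y, b.diagHom (heisWeightHom x) z⁆ := by
  refine LinearMap.map_lie_of_basis b (b.diagHom (heisWeightHom x)).toLinearMap
    (fun p q => ?_) y z
  by_cases hpq : HeisPair p q
  · have hskew i : ⁅b (Sum.inl (i, true)), b (Sum.inl (i, false))⁆ = -b (Sum.inr ()) := by
      rw [← lie_skew, hbr]
    obtain ⟨i, ⟨rfl, rfl⟩ | ⟨rfl, rfl⟩⟩ := hpq
    · simp [Units.smul_def, hbr, smul_smul]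
    · simp [Units.smul_def, hskew, smul_smul, mul_left_comm]
  · simp [Units.smul_def, hz p q hpq]

lemma isDiagHeisAut_of_commute [Infinite F]
    (hbr : ∀ i : Fin k, ⁅b (Sum.inl (i, false)), b (Sum.inl (i, true))⁆ = b (Sum.inr ()))
    {f : L ≃ₗ[F] L} (hf : ∀ x y : L, f ⁅x, y⁆ = ⁅f x, f y⁆)
    (hcomm : ∀ x, Commute f (b.diagHom (heisWeightHom x))) :
    IsDiagHeisAut b f := by
  set a := fun p => b.repr (f (b p)) p
  have hfa : ∀ p, f (b p) = a p • b p :=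
    b.apply_basis_eq_smul_of_commute _ (exists_heisWeightHom_ne (Units.exists_mul_self_ne_one F))
      (by rintro _ ⟨x, rfl⟩; exact hcomm x)
  refine isDiagHeisAut_of_apply_basis b a (fun p hp => b.ne_zero p ?_) hfa (fun i => ?_)
  · exact f.map_eq_zero_iff.1 (by rw [hfa, hp, zero_smul])
  · refine smul_left_injective F (b.ne_zero (.inr ())) ?_
    calc (a (.inl (i, false)) * a (.inl (i, true))) • b (.inr ())
        = ⁅f (b (.inl (i, false))), f (b (.inl (i, true)))⁆ := by
          rw [hfa, hfa, smul_lie, lie_smul, hbr, smul_smul]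
      _ = f (b (.inr ())) := by rw [← hf, hbr]
      _ = a (.inr ()) • b (.inr ()) := hfa _

end Heisenberg

/-- The diagonal automorphisms of the Heisenberg algebra `H_n` form a maximal
torus of `Aut(H_n)`: an abelian subgroup isomorphic to `(Fˣ)^{k+1}` such that
any automorphism commuting with all its elements belongs to it. -/
theorem heisenberg_diagonal_maximal_torus
    (F : Type*) [Field F] [Infinite F]
    (L : Type*) [LieRing L] [LieAlgebra F L] (k : ℕ)
    (b : Module.Basis ((Fin k × Bool) ⊕ Unit) F L)
    (hbr : ∀ i : Fin k, ⁅b (Sum.inl (i, false)), b (Sum.inl (i, true))⁆ = b (Sum.inr ()))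
    (hz : ∀ p q : (Fin k × Bool) ⊕ Unit, ¬ HeisPair p q → ⁅b p, b q⁆ = 0) :
    ∃ T : Subgroup (L ≃ₗ[F] L),
      (↑T = {f : L ≃ₗ[F] L |
        (∀ x y : L, f ⁅x, y⁆ = ⁅f x, f y⁆) ∧ IsDiagHeisAut b f}) ∧
      (∀ f ∈ T, ∀ g ∈ T, f * g = g * f) ∧
      Nonempty (T ≃* ((Fin k → Fˣ) × Fˣ)) ∧
      (∀ f : L ≃ₗ[F] L, (∀ x y : L, f ⁅x, y⁆ = ⁅f x, f y⁆) →
        (∀ g ∈ T, f * g = g * f) → f ∈ T) := by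
  set φ := b.diagHom.comp (heisWeightHom (G := Fˣ) (k := k))
  have hφ : Function.Injective φ := b.diagHom_injective.comp heisWeightHom_injective
  refine ⟨φ.range, ?_, ?_, ⟨(MonoidHom.ofInjective hφ).symm⟩, ?_⟩
  · ext f
    refine ⟨fun hf => ⟨?_, (isDiagHeisAut_iff_mem_range b).2 hf⟩,
      fun hf => (isDiagHeisAut_iff_mem_range b).1 hf.2⟩
    obtain ⟨x, rfl⟩ := hf
    exact diagHom_heisWeightHom_map_lie hbr hz x
  · rintro _ ⟨x, rfl⟩ _ ⟨y, rfl⟩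
    rw [← map_mul, mul_comm, map_mul]
  · intro f hf hcomm
    rw [← isDiagHeisAut_iff_mem_range b]
    exact isDiagHeisAut_of_commute hbr hf fun x => hcomm _ ⟨x, rfl⟩
end

section
/- Let H_n be the Heisenberg algebra of dimension n = 2k+1 over a field F and P = H_n/Z(H_n) the associated symplectic space of dimension 2k. Then Aut(H_n) is isomorphic to the semidirect product GSp(P) ⋉ F^{2k}, where the product on GSp(P) × F^{2k} is (f̄, λ)(ḡ, η) = (f̄ḡ, λ·M(ḡ) + λ_f η), with M(ḡ) the matrix of ḡ in a fixed symplectic basis and λ_f the similitude factor of f̄. -/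
open Submodule

theorem Module.Basis.constr_symm_comp {R M ι : Type*} [CommRing R] [AddCommGroup M]
    [Module R M] [Fintype ι] [DecidableEq ι] (b : Module.Basis ι R M) (μ : Module.Dual R M)
    (g : M →ₗ[R] M) :
    (b.constr R).symm (μ ∘ₗ g) =
      Matrix.vecMul ((b.constr R).symm μ) (LinearMap.toMatrix b b g) := by
  have h := LinearMap.toMatrix_mulVec_repr b.dualBasis b.dualBasis
    (Module.Dual.transpose (R := R) g) μ
  rw [LinearMap.toMatrix_transpose, Matrix.mulVec_transpose,
    show ⇑(b.dualBasis.repr μ) = (b.constr R).symm μ from funext fun i => by simp] at h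
  ext i
  simpa [Module.Dual.transpose_apply] using (congrFun h i).symm

theorem Module.Basis.sub_coord_smul_mem_span_range_inl {R M ι : Type*} [CommRing R]
    [AddCommGroup M] [Module R M] (b : Module.Basis (ι ⊕ Unit) R M) (v : M) :
    v - b.coord (.inr ()) v • b (.inr ()) ∈ span R (Set.range fun i => b (.inl i)) := by
  rw [← Function.comp_def b, Set.range_comp, b.mem_span_image]
  rintro (i | ⟨⟩) hi
  · exact Set.mem_range_self i
  · simp at hi

def lieAutSubgroup (F L : Type*) [CommRing F] [LieRing L] [LieAlgebra F L] :
    Subgroup (L ≃ₗ[F] L) where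
  carrier := {f | ∀ x y : L, f ⁅x, y⁆ = ⁅f x, f y⁆}
  one_mem' _ _ := rfl
  mul_mem' {f g} hf hg x y := by rw [LinearEquiv.mul_apply, hg x y, hf]; rfl
  inv_mem' {f} hf x y := f.injective <| by
    rw [LinearEquiv.coe_inv, hf, f.apply_symm_apply, f.apply_symm_apply, f.apply_symm_apply]

abbrev Similitudes {F M : Type*} [CommRing F] [AddCommGroup M] [Module F M]
    (B : LinearMap.BilinForm F M) :=
  {p : (M ≃ₗ[F] M) × F // p.2 ≠ 0 ∧ ∀ x y, B (p.1 x) (p.1 y) = p.2 * B x y}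

section Splitting

variable {R M : Type*} [CommRing R] [AddCommGroup M] [Module R M] {z : M} {c : M →ₗ[R] R}

theorem eq_coord_smul_of_mem_span_singleton (hc : c z = 1) {v : M} (hv : v ∈ R ∙ z) :
    v = c v • z := by
  obtain ⟨a, rfl⟩ := mem_span_singleton.1 hv
  simp [hc]

noncomputable def quotProdCoord (hc : c z = 1) : M ≃ₗ[R] (M ⧸ (R ∙ z)) × R :=
  LinearEquiv.ofBijective ((R ∙ z).mkQ.prod c) ⟨by
    rw [← LinearMap.ker_eq_bot, LinearMap.ker_prod, ker_mkQ, eq_bot_iff]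
    rintro v ⟨hv, hcv⟩
    rw [mem_bot, eq_coord_smul_of_mem_span_singleton hc hv, LinearMap.mem_ker.1 hcv, zero_smul], by
    rintro ⟨u, t⟩
    obtain ⟨v, rfl⟩ := mkQ_surjective _ u
    refine ⟨v + (t - c v) • z, ?_⟩
    simp [hc, (Quotient.mk_eq_zero _).2 (mem_span_singleton_self z)]⟩

@[simp]
theorem quotProdCoord_apply (hc : c z = 1) (v : M) :
    quotProdCoord hc v = (Submodule.Quotient.mk v, c v) :=
  rfl

noncomputable def centralComponent (hc : c z = 1) (f : M →ₗ[R] M) : Module.Dual R (M ⧸ (R ∙ z)) :=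
  (R ∙ z).liftQ (c ∘ₗ f - c (f z) • c) <| (span_singleton_le_iff_mem _ _).2 <| by simp [hc]

@[simp]
theorem centralComponent_mk (hc : c z = 1) (f : M →ₗ[R] M) (x : M) :
    centralComponent hc f (Submodule.Quotient.mk x) = c (f x) - c (f z) * c x :=
  rfl

end Splitting

section Field

variable {F L : Type*} [Field F] [AddCommGroup L] [Module F L] {z : L} {c : L →ₗ[F] F}

theorem coord_apply_ne_zero (hc : c z = 1) (f : L ≃ₗ[F] L) (hfz : f z ∈ F ∙ z) : c (f z) ≠ 0 := by
  intro h
  have hz := eq_coord_smul_of_mem_span_singleton hc hfz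
  rw [h, zero_smul, f.map_eq_zero_iff] at hz
  simp [hz] at hc

theorem map_span_singleton_eq_of_mem (hc : c z = 1) (f : L ≃ₗ[F] L) (hfz : f z ∈ F ∙ z) :
    (F ∙ z).map (f : L →ₗ[F] L) = F ∙ z := by
  rw [map_span, Set.image_singleton, LinearEquiv.coe_coe,
    eq_coord_smul_of_mem_span_singleton hc hfz,
    span_singleton_smul_eq (IsUnit.mk0 _ (coord_apply_ne_zero hc f hfz))]

noncomputable def quotMap (hc : c z = 1) (f : L ≃ₗ[F] L) (hfz : f z ∈ F ∙ z) :
    (L ⧸ (F ∙ z)) ≃ₗ[F] L ⧸ (F ∙ z) :=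
  Quotient.equiv _ _ f (map_span_singleton_eq_of_mem hc f hfz)

@[simp]
theorem quotMap_mk (hc : c z = 1) (f : L ≃ₗ[F] L) (hfz : f z ∈ F ∙ z) (x : L) :
    quotMap hc f hfz (Submodule.Quotient.mk x) = Submodule.Quotient.mk (f x) :=
  rfl

noncomputable def skewEquiv (hc : c z = 1) (g : (L ⧸ (F ∙ z)) ≃ₗ[F] L ⧸ (F ∙ z)) (l : F)
    (hl : l ≠ 0) (μ : Module.Dual F (L ⧸ (F ∙ z))) : L ≃ₗ[F] L :=
  (quotProdCoord hc).trans <|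
    (g.skewProd (LinearEquiv.smulOfNeZero F F l hl) μ).trans (quotProdCoord hc).symm

variable (hc : c z = 1) (g : (L ⧸ (F ∙ z)) ≃ₗ[F] L ⧸ (F ∙ z)) {l : F} (hl : l ≠ 0)
  (μ : Module.Dual F (L ⧸ (F ∙ z)))

theorem quotProdCoord_skewEquiv (x : L) :
    quotProdCoord hc (skewEquiv hc g l hl μ x) =
      (g (Submodule.Quotient.mk x), l * c x + μ (Submodule.Quotient.mk x)) := by
  simp [skewEquiv]

theorem mk_skewEquiv (x : L) :
    (Submodule.Quotient.mk (skewEquiv hc g l hl μ x) : L ⧸ (F ∙ z)) = g (Submodule.Quotient.mk x) :=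
  congrArg Prod.fst (quotProdCoord_skewEquiv hc g hl μ x)

theorem coord_skewEquiv (x : L) :
    c (skewEquiv hc g l hl μ x) = l * c x + μ (Submodule.Quotient.mk x) :=
  congrArg Prod.snd (quotProdCoord_skewEquiv hc g hl μ x)

theorem skewEquiv_apply_self : skewEquiv hc g l hl μ z = l • z :=
  (quotProdCoord hc).injective <| by
    rw [quotProdCoord_skewEquiv, map_smul, quotProdCoord_apply, hc,
      (Quotient.mk_eq_zero _).2 (mem_span_singleton_self z)]
    simp

theorem quotMap_mul (hc : c z = 1) {f g : L ≃ₗ[F] L} (hfz : f z ∈ F ∙ z) (hgz : g z ∈ F ∙ z)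
    (hfgz : (f * g) z ∈ F ∙ z) :
    quotMap hc (f * g) hfgz = quotMap hc f hfz * quotMap hc g hgz := by
  ext u
  obtain ⟨x, rfl⟩ := mkQ_surjective _ u
  rfl

theorem coord_apply_apply_self (hc : c z = 1) (f : L ≃ₗ[F] L) {g : L ≃ₗ[F] L}
    (hgz : g z ∈ F ∙ z) :
    c (f (g z)) = c (f z) * c (g z) := by
  have h := congrArg (c ∘ f) (eq_coord_smul_of_mem_span_singleton hc hgz)
  simpa [mul_comm] using h

theorem centralComponent_mul (hc : c z = 1) (f : L ≃ₗ[F] L) {g : L ≃ₗ[F] L}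
    (hgz : g z ∈ F ∙ z) :
    centralComponent hc ↑(f * g) =
      centralComponent hc f ∘ₗ quotMap hc g hgz + c (f z) • centralComponent hc g := by
  ext x
  simp [coord_apply_apply_self hc f hgz]
  ring

end Field

section Heisenberg

variable {F L : Type*} [Field F] [LieRing L] [LieAlgebra F L] {z : L} {c : L →ₗ[F] F}
  {B : LinearMap.BilinForm F (L ⧸ (F ∙ z))}

theorem apply_mem_span_singleton_of_lie_eq
    (hB : ∀ x y : L, ⁅x, y⁆ = B (Submodule.Quotient.mk x) (Submodule.Quotient.mk y) • z)
    {x y : L} (hxy : ⁅x, y⁆ = z) {f : L ≃ₗ[F] L} (hf : f ∈ lieAutSubgroup F L) : f z ∈ F ∙ z := by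
  have hfxy := hf x y
  rw [hxy] at hfxy
  rw [hfxy, hB]
  exact (F ∙ z).smul_mem _ (mem_span_singleton_self z)

theorem quotMap_similitude
    (hB : ∀ x y : L, ⁅x, y⁆ = B (Submodule.Quotient.mk x) (Submodule.Quotient.mk y) • z)
    (hc : c z = 1) {f : L ≃ₗ[F] L} (hf : f ∈ lieAutSubgroup F L) (hfz : f z ∈ F ∙ z)
    (u v : L ⧸ (F ∙ z)) : B (quotMap hc f hfz u) (quotMap hc f hfz v) = c (f z) * B u v := by
  obtain ⟨x, rfl⟩ := mkQ_surjective _ u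
  obtain ⟨y, rfl⟩ := mkQ_surjective _ v
  apply smul_left_injective F (ne_zero_of_map (f := c) (hc ▸ one_ne_zero))
  dsimp only [mkQ_apply]
  rw [quotMap_mk, quotMap_mk, ← hB, ← hf, hB, map_smul, mul_comm, ← smul_smul,
    ← eq_coord_smul_of_mem_span_singleton hc hfz]

theorem skewEquiv_mem_lieAutSubgroup
    (hB : ∀ x y : L, ⁅x, y⁆ = B (Submodule.Quotient.mk x) (Submodule.Quotient.mk y) • z)
    (hc : c z = 1) {g : (L ⧸ (F ∙ z)) ≃ₗ[F] L ⧸ (F ∙ z)} {l : F} (hl : l ≠ 0)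
    (hg : ∀ u v, B (g u) (g v) = l * B u v) (μ : Module.Dual F (L ⧸ (F ∙ z))) :
    skewEquiv hc g l hl μ ∈ lieAutSubgroup F L := by
  intro x y
  rw [hB, hB, map_smul, skewEquiv_apply_self, mk_skewEquiv, mk_skewEquiv, hg, smul_smul, mul_comm]

noncomputable def heisenbergAutEquiv
    (hB : ∀ x y : L, ⁅x, y⁆ = B (Submodule.Quotient.mk x) (Submodule.Quotient.mk y) • z)
    (hc : c z = 1) (hcent : ∀ f ∈ lieAutSubgroup F L, f z ∈ F ∙ z) :
    lieAutSubgroup F L ≃ Similitudes B × Module.Dual F (L ⧸ (F ∙ z)) where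
  toFun f := (⟨(quotMap hc f (hcent f f.2), c ((f : L ≃ₗ[F] L) z)),
      coord_apply_ne_zero hc f (hcent f f.2), quotMap_similitude hB hc f.2 (hcent f f.2)⟩,
    centralComponent hc f)
  invFun p := ⟨skewEquiv hc p.1.1.1 p.1.1.2 p.1.2.1 p.2,
      skewEquiv_mem_lieAutSubgroup hB hc p.1.2.1 p.1.2.2 p.2⟩
  left_inv f := by
    ext x
    apply (quotProdCoord hc).injective
    rw [quotProdCoord_skewEquiv]
    simp
  right_inv := by
    rintro ⟨⟨⟨g, l⟩, hl, hg⟩, μ⟩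
    have hl' : c (skewEquiv hc g l hl μ z) = l := by simp [skewEquiv_apply_self, hc]
    refine Prod.ext (Subtype.ext (Prod.ext ?_ hl')) ?_
    · ext u
      obtain ⟨x, rfl⟩ := mkQ_surjective _ u
      exact mk_skewEquiv hc g hl μ x
    · ext x
      simp [coord_skewEquiv, hl']

@[simp]
theorem heisenbergAutEquiv_apply_snd
    (hB : ∀ x y : L, ⁅x, y⁆ = B (Submodule.Quotient.mk x) (Submodule.Quotient.mk y) • z)
    (hc : c z = 1) (hcent : ∀ f ∈ lieAutSubgroup F L, f z ∈ F ∙ z) (f : lieAutSubgroup F L) :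
    (heisenbergAutEquiv hB hc hcent f).2 = centralComponent hc f :=
  rfl

end Heisenberg

theorem heisenberg_automorphism_group_structure_general
    (F : Type*) [Field F]
    (L : Type*) [LieRing L] [LieAlgebra F L] (k : ℕ)
    (b : Module.Basis ((Fin k × Bool) ⊕ Unit) F L)
    (hbr : ∀ i : Fin k, ⁅b (Sum.inl (i, false)), b (Sum.inl (i, true))⁆ = b (Sum.inr ()))
    -- the induced symplectic form on `P = L ⧸ F•z`
    (B : LinearMap.BilinForm F (L ⧸ (F ∙ (b (Sum.inr ())))))
    (hB : ∀ x y : L, ⁅x, y⁆ =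
      B (Submodule.Quotient.mk x) (Submodule.Quotient.mk y) • b (Sum.inr ()))
    -- the fixed symplectic basis of `P`, image of the `e_i, ê_i`
    (bp : Module.Basis (Fin k × Bool) F (L ⧸ (F ∙ (b (Sum.inr ())))))
    (hbp : ∀ p : Fin k × Bool, bp p = Submodule.Quotient.mk (b (Sum.inl p))) :
    ∃ A : Subgroup (L ≃ₗ[F] L),
      (↑A = {f : L ≃ₗ[F] L | ∀ x y : L, f ⁅x, y⁆ = ⁅f x, f y⁆}) ∧
      ∃ e : A ≃
        ({p : ((L ⧸ (F ∙ (b (Sum.inr ())))) ≃ₗ[F] (L ⧸ (F ∙ (b (Sum.inr ()))))) × F //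
            p.2 ≠ 0 ∧ ∀ x y, B (p.1 x) (p.1 y) = p.2 * B x y} ×
          ((Fin k × Bool) → F)),
        -- the similitude component is the induced map on the quotient
        (∀ (f : A) (x : L),
          (e f).1.1.1 (Submodule.Quotient.mk x)
            = Submodule.Quotient.mk ((f : L ≃ₗ[F] L) x)) ∧
        -- the vector component measures the difference `f - f̄` on the `e_p`
        (∀ (f : A) (p : Fin k × Bool),
          (f : L ≃ₗ[F] L) (b (Sum.inl p)) - (e f).2 p • b (Sum.inr ())
            ∈ Submodule.span F (Set.range (fun p' : Fin k × Bool => b (Sum.inl p')))) ∧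
        -- `e` carries the group law to the stated semidirect product law
        (∀ f g : A,
          (e (f * g)).1.1.1
            = (e f).1.1.1 * (e g).1.1.1 ∧
          (e (f * g)).1.1.2
            = (e f).1.1.2 * (e g).1.1.2 ∧
          (e (f * g)).2
            = Matrix.vecMul (e f).2
                (LinearMap.toMatrix bp bp ((e g).1.1.1 : _ →ₗ[F] _))
              + (e f).1.1.2 • (e g).2) := by
  have hc : b.coord (.inr ()) (b (.inr ())) = 1 := by simp
  have hcent : ∀ f ∈ lieAutSubgroup F L, f (b (.inr ())) ∈ F ∙ b (.inr ()) := by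
    rcases isEmpty_or_nonempty (Fin k) with _ | ⟨⟨i⟩⟩
    · have : Subsingleton (L ⧸ (F ∙ b (.inr ()))) := bp.repr.toEquiv.subsingleton
      exact fun f _ => (Quotient.mk_eq_zero _).1 (Subsingleton.elim _ _)
    · exact fun f hf => apply_mem_span_singleton_of_lie_eq hB (hbr i) hf
  let e := (heisenbergAutEquiv hB hc hcent).trans
    ((Equiv.refl _).prodCongr (bp.constr F).symm.toEquiv)
  refine ⟨lieAutSubgroup F L, rfl, e, fun f x => rfl, fun f p => ?_, fun f g => ⟨?_, ?_, ?_⟩⟩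
  · have : (e f).2 p = b.coord (.inr ()) ((f : L ≃ₗ[F] L) (b (.inl p))) := by simp [e, hbp]
    rw [this]
    exact b.sub_coord_smul_mem_span_range_inl _
  · exact quotMap_mul hc (hcent f f.2) (hcent g g.2) (hcent _ (f * g).2)
  · exact coord_apply_apply_self hc _ (hcent g g.2)
  · have hlaw := congrArg (bp.constr F).symm (centralComponent_mul hc f (hcent g g.2))
    rw [map_add, map_smul, bp.constr_symm_comp] at hlaw
    exact hlaw

/-- `Aut(H_n) ≅ GSp(P) ⋉ F^{2k}`: the automorphism group of the Heisenberg
algebra is isomorphic to the semidirect product of the symplectic similitude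
group of `P = H_n/Z(H_n)` with `F^{2k}`, with multiplication
`(f̄,λ)(ḡ,η) = (f̄ḡ, λ·M(ḡ) + λ_f η)`.  Similitudes are encoded together
with their (unique) similitude factor. -/
theorem heisenberg_automorphism_group_structure
    (F : Type*) [Field F]
    (L : Type*) [LieRing L] [LieAlgebra F L] (k : ℕ)
    (b : Module.Basis ((Fin k × Bool) ⊕ Unit) F L)
    (hbr : ∀ i : Fin k, ⁅b (Sum.inl (i, false)), b (Sum.inl (i, true))⁆ = b (Sum.inr ()))
    (hz : ∀ p q : (Fin k × Bool) ⊕ Unit, ¬ HeisPair p q → ⁅b p, b q⁆ = 0)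
    -- the induced symplectic form on `P = L ⧸ F•z`
    (B : LinearMap.BilinForm F (L ⧸ (F ∙ (b (Sum.inr ())))))
    (hB : ∀ x y : L, ⁅x, y⁆ =
      B (Submodule.Quotient.mk x) (Submodule.Quotient.mk y) • b (Sum.inr ()))
    -- the fixed symplectic basis of `P`, image of the `e_i, ê_i`
    (bp : Module.Basis (Fin k × Bool) F (L ⧸ (F ∙ (b (Sum.inr ())))))
    (hbp : ∀ p : Fin k × Bool, bp p = Submodule.Quotient.mk (b (Sum.inl p))) :
    ∃ A : Subgroup (L ≃ₗ[F] L),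
      (↑A = {f : L ≃ₗ[F] L | ∀ x y : L, f ⁅x, y⁆ = ⁅f x, f y⁆}) ∧
      ∃ e : A ≃
        ({p : ((L ⧸ (F ∙ (b (Sum.inr ())))) ≃ₗ[F] (L ⧸ (F ∙ (b (Sum.inr ()))))) × F //
            p.2 ≠ 0 ∧ ∀ x y, B (p.1 x) (p.1 y) = p.2 * B x y} ×
          ((Fin k × Bool) → F)),
        -- the similitude component is the induced map on the quotient
        (∀ (f : A) (x : L),
          (e f).1.1.1 (Submodule.Quotient.mk x)
            = Submodule.Quotient.mk ((f : L ≃ₗ[F] L) x)) ∧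
        -- the vector component measures the difference `f - f̄` on the `e_p`
        (∀ (f : A) (p : Fin k × Bool),
          (f : L ≃ₗ[F] L) (b (Sum.inl p)) - (e f).2 p • b (Sum.inr ())
            ∈ Submodule.span F (Set.range (fun p' : Fin k × Bool => b (Sum.inl p')))) ∧
        -- `e` carries the group law to the stated semidirect product law
        (∀ f g : A,
          (e (f * g)).1.1.1
            = (e f).1.1.1 * (e g).1.1.1 ∧
          (e (f * g)).1.1.2
            = (e f).1.1.2 * (e g).1.1.2 ∧
          (e (f * g)).2
            = Matrix.vecMul (e f).2
                (LinearMap.toMatrix bp bp ((e g).1.1.1 : _ →ₗ[F] _))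
              + (e f).1.1.2 • (e g).2) :=
  heisenberg_automorphism_group_structure_general F L k b hbr B hB bp hbp
end

section
/- Let Γ^r be the fine Z^{1+k+r} × Z_2^{q}-grading (q = m-2r) of the Heisenberg superalgebra H_{n,m}, n = 2k+1, given by a homogeneous basis {z, e_i, ê_i, u_j, v_j, z_l} with nonzero brackets [e_i,ê_i] = [u_j,v_j] = [z_l,z_l] = z. Then its Weyl group satisfies W(Γ^r) ≅ Z_2^{r+k} ⋊ (S_k × S_r × S_q). -/
/-!
An automorphism `f` of the grading sends each basis vector `c p` to a nonzero multiple of some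
`c (π p)`, and `f ↦ π` is a homomorphism to the permutations of the indices whose kernel is the
stabilizer of the grading. Since `f` preserves the parity and `[c p, c p'] ≠ 0` holds exactly for
the pairs `{e_i, ê_i}`, `{u_j, v_j}`, `{z_l, z_l}`, the permutation `π` fixes `z` and permutes
these blocks, i.e. it is a signed permutation, an element of `ℤ₂^{k+r} ⋊ (S_k × S_r × S_q)`.
Conversely every signed permutation is induced by an automorphism sending basis vectors to `±`
basis vectors.
-/

abbrev SupIdx (k r q : ℕ) := ((Fin k × Bool) ⊕ Unit) ⊕ ((Fin r × Bool) ⊕ Fin q)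

def SupPair {k r q : ℕ} (p p' : SupIdx k r q) : Prop :=
  (∃ i : Fin k, ∃ s : Bool,
    p = Sum.inl (Sum.inl (i, s)) ∧ p' = Sum.inl (Sum.inl (i, !s))) ∨
  (∃ j : Fin r, ∃ s : Bool,
    p = Sum.inr (Sum.inl (j, s)) ∧ p' = Sum.inr (Sum.inl (j, !s))) ∨
  (∃ l : Fin q, p = Sum.inr (Sum.inr l) ∧ p' = Sum.inr (Sum.inr l))

open Function Equiv Pointwise

attribute [local instance] arrowAction arrowMulDistribMulAction

section PermutingSubgroup

variable {G X ι : Type*} [Group G] [MulAction G X] [Finite ι] {C : ι → X}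

def permutingSubgroup (hC : Injective C) : Subgroup G where
  carrier := {g | ∀ i, ∃ j, g • C i = C j}
  one_mem' i := ⟨i, one_smul G (C i)⟩
  mul_mem' {g h} hg hh i := by
    obtain ⟨j, hj⟩ := hh i
    obtain ⟨j', hj'⟩ := hg j
    exact ⟨j', by rw [mul_smul, hj, hj']⟩
  inv_mem' {g} hg i := by
    choose π hπ using hg
    have hπ_inj : Injective π := fun a b hab => hC (smul_left_cancel g (by rw [hπ, hπ, hab]))
    obtain ⟨j, rfl⟩ := Finite.surjective_of_injective hπ_inj i
    exact ⟨j, by rw [← hπ, inv_smul_smul]⟩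

namespace permutingSubgroup

variable (hC : Injective C)

noncomputable def index (g : permutingSubgroup (G := G) hC) (i : ι) : ι := (g.2 i).choose

theorem smul_index (g : permutingSubgroup (G := G) hC) (i : ι) :
    (g : G) • C i = C (index hC g i) :=
  (g.2 i).choose_spec

theorem index_eq_iff {g : permutingSubgroup (G := G) hC} {i j : ι} :
    index hC g i = j ↔ (g : G) • C i = C j := by
  rw [smul_index, hC.eq_iff]

noncomputable def toPerm : permutingSubgroup (G := G) hC →* Perm ι where
  toFun g :=
    { toFun := index hC g
      invFun := index hC g⁻¹
      left_inv i := by rw [index_eq_iff, ← smul_index hC, Subgroup.coe_inv, inv_smul_smul]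
      right_inv i := by rw [index_eq_iff, ← smul_index hC, Subgroup.coe_inv, smul_inv_smul] }
  map_one' := Perm.ext fun i => by
    simp only [coe_fn_mk, Perm.one_apply, index_eq_iff, Subgroup.coe_one, one_smul]
  map_mul' g h := Perm.ext fun i => by
    simp only [coe_fn_mk, Perm.mul_apply, index_eq_iff, Subgroup.coe_mul, mul_smul, smul_index]

theorem smul_toPerm (g : permutingSubgroup (G := G) hC) (i : ι) :
    (g : G) • C i = C (toPerm hC g i) :=
  smul_index hC g i

theorem toPerm_eq_iff {g : permutingSubgroup (G := G) hC} {π : Perm ι} :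
    toPerm hC g = π ↔ ∀ i, (g : G) • C i = C (π i) :=
  Perm.ext_iff.trans (forall_congr' fun _ => index_eq_iff hC)

end permutingSubgroup

end PermutingSubgroup

theorem MonoidHom.exists_surjective_comp_eq_of_range_eq {H W P : Type*} [Group H] [Group W]
    [Group P] {j : W →* P} (hj : Injective j) {ψ : H →* P} (h : ψ.range = j.range) :
    ∃ θ : H →* W, Surjective θ ∧ j.comp θ = ψ := by
  let e := ofInjective hj
  refine ⟨e.symm.toMonoidHom.comp (ψ.codRestrict j.range fun x => h ▸ ⟨x, rfl⟩),
    fun w => ?_, ?_⟩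
  · obtain ⟨x, hx⟩ : j w ∈ ψ.range := h ▸ ⟨w, rfl⟩
    refine ⟨x, e.injective ?_⟩
    ext
    simp [e, hx, ofInjective_apply]
  · ext x
    simp [e]

theorem Module.Basis.span_singleton_injective {ι R M : Type*} [Ring R] [Nontrivial R]
    [AddCommGroup M] [Module R M] (c : Module.Basis ι R M) :
    Function.Injective fun i => (R ∙ c i) :=
  c.linearIndependent.iSupIndep_span_singleton.injective fun i => by simpa using c.ne_zero i

theorem Module.Basis.mem_iff_isLeft {ι κ R M : Type*} [Ring R] [Nontrivial R] [AddCommGroup M]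
    [Module R M] (c : Module.Basis (ι ⊕ κ) R M) {E₀ E₁ : Submodule R M} (hE : Disjoint E₀ E₁)
    (h₀ : ∀ i, c (.inl i) ∈ E₀) (h₁ : ∀ j, c (.inr j) ∈ E₁) (p : ι ⊕ κ) :
    c p ∈ E₀ ↔ p.isLeft := by
  rcases p with i | j
  · simpa using h₀ i
  · simpa using fun h => c.ne_zero _ (Submodule.disjoint_def.mp hE _ h (h₁ j))

theorem Module.Basis.span_image_range_inl_inr_eq {ι κ R M : Type*} [Ring R] [AddCommGroup M]
    [Module R M] (c : Module.Basis (ι ⊕ κ) R M) {E₀ E₁ : Submodule R M} (hE : IsCompl E₀ E₁)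
    (h₀ : ∀ i, c (.inl i) ∈ E₀) (h₁ : ∀ j, c (.inr j) ∈ E₁) :
    Submodule.span R (c '' Set.range .inl) = E₀ ∧ Submodule.span R (c '' Set.range .inr) = E₁ := by
  have hA : Submodule.span R (c '' Set.range .inl) ≤ E₀ := by
    simpa [Submodule.span_le, Set.range_subset_iff] using h₀
  have hB : Submodule.span R (c '' Set.range .inr) ≤ E₁ := by
    simpa [Submodule.span_le, Set.range_subset_iff] using h₁
  have hAB : Codisjoint (Submodule.span R (c '' Set.range .inl))
      (Submodule.span R (c '' Set.range .inr)) := by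
    rw [codisjoint_iff, ← Submodule.span_union, ← Set.image_union, Set.range_inl_union_range_inr,
      Set.image_univ, c.span_eq]
  exact ⟨(le_iff_eq_of_codisjoint_of_disjoint (hAB.mono_right hB) hE.disjoint.symm).mp hA,
    (le_iff_eq_of_codisjoint_of_disjoint (hAB.symm.mono_right hA) hE.disjoint).mp hB⟩

section LinearEquiv

variable {R M : Type*} [Semiring R] [AddCommMonoid M] [Module R M]

theorem LinearEquiv.mem_iff_of_smul_eq {f : M ≃ₗ[R] M} {E : Submodule R M} (hf : f • E = E)
    {x y : M} {u : Rˣ} (h : f x = u • y) : y ∈ E ↔ x ∈ E := by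
  rw [← Submodule.smul_mem_iff' E u, ← h]
  conv_lhs => rw [← hf]
  exact (E.mem_map_equiv).trans (by rw [LinearEquiv.symm_apply_apply])

theorem LinearEquiv.smul_span_image_eq (f : M ≃ₗ[R] M) {ι : Type*} {v : ι → M} {π : Perm ι}
    {u : ι → Rˣ} (h : ∀ i, f (v i) = u i • v (π i)) {s : Set ι} (hs : ∀ i, π i ∈ s ↔ i ∈ s) :
    f • Submodule.span R (v '' s) = Submodule.span R (v '' s) := by
  change (Submodule.span R (v '' s)).map (f : M →ₗ[R] M) = _
  rw [Submodule.map_span, Set.image_image]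
  apply le_antisymm <;> rw [Submodule.span_le] <;> rintro _ ⟨i, hi, rfl⟩
  · change f (v i) ∈ _
    rw [h]
    exact Submodule.smul_mem _ _ (Submodule.subset_span ⟨π i, (hs i).mpr hi, rfl⟩)
  · have hv : v i = (u (π.symm i))⁻¹ • f (v (π.symm i)) := by
      rw [h, Equiv.apply_symm_apply, inv_smul_smul]
    rw [hv]
    exact Submodule.smul_mem _ _
      (Submodule.subset_span ⟨π.symm i, (hs _).mp (by simpa using hi), rfl⟩)

end LinearEquiv

theorem LinearEquiv.smul_span_singleton_eq_iff {F L : Type*} [Field F] [AddCommGroup L]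
    [Module F L] {f : L ≃ₗ[F] L} {x y : L} : f • (F ∙ x) = F ∙ y ↔ ∃ u : Fˣ, f x = u • y := by
  change (F ∙ x).map (f : L →ₗ[F] L) = _ ↔ _
  rw [Submodule.map_span, Set.image_singleton, Submodule.span_singleton_eq_span_singleton]
  exact ⟨fun ⟨u, hu⟩ => ⟨u⁻¹, by rw [← hu, inv_smul_smul]; rfl⟩,
    fun ⟨u, hu⟩ => ⟨u⁻¹, by rw [LinearEquiv.coe_coe, hu, inv_smul_smul]⟩⟩

section Bilinear

variable {R M : Type*} [CommSemiring R] [AddCommMonoid M] [Module R M]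

def LinearMap.autSubgroup (br : M →ₗ[R] M →ₗ[R] M) : Subgroup (M ≃ₗ[R] M) where
  carrier := {f | ∀ x y, f (br x y) = br (f x) (f y)}
  one_mem' _ _ := rfl
  mul_mem' {f g} hf hg x y := by
    change f (g (br x y)) = br (f (g x)) (f (g y))
    rw [hg, hf]
  inv_mem' {f} hf x y := f.injective <| by
    rw [hf]
    change f (f.symm (br x y)) = br (f (f.symm x)) (f (f.symm y))
    simp only [LinearEquiv.apply_symm_apply]

theorem LinearMap.apply_eq_zero_iff_of_mem_autSubgroup {br : M →ₗ[R] M →ₗ[R] M}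
    {f : M ≃ₗ[R] M} (hf : f ∈ br.autSubgroup) {x y x' y' : M} {u v : Rˣ} (hx : f x = u • x')
    (hy : f y = v • y') : br x' y' = 0 ↔ br x y = 0 := by
  conv_rhs => rw [← f.map_eq_zero_iff]
  rw [hf x y, hx, hy]
  simp only [LinearMap.map_smul_of_tower, LinearMap.smul_apply, smul_eq_zero_iff_eq]

end Bilinear

def boolFlip : Multiplicative (ZMod 2) →* Perm Bool where
  toFun x := if x = 1 then 1 else boolNot
  map_one' := rfl
  map_mul' := by decide

theorem boolFlip_not : ∀ (x : Multiplicative (ZMod 2)) (s : Bool),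
    boolFlip x (!s) = !boolFlip x s := by
  decide

theorem boolFlip_apply_false_eq_false_iff :
    ∀ x : Multiplicative (ZMod 2), boolFlip x false = false ↔ x = 1 := by
  decide

theorem exists_boolFlip_apply_false_eq : ∀ b : Bool, ∃ x, boolFlip x false = b := by
  decide

theorem exists_perm_boolFlip_of_apply_not {α : Type*} [Finite α] {f : α × Bool → α × Bool}
    (hf : Injective f) (hnot : ∀ a s, f (a, !s) = ((f (a, s)).1, !(f (a, s)).2)) :
    ∃ (σ : Perm α) (ε : α → Multiplicative (ZMod 2)),
      ∀ a s, f (a, s) = (σ a, boolFlip (ε a) s) := by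
  choose ε hε using fun a => exists_boolFlip_apply_false_eq (f (a, false)).2
  have hf' : ∀ a s, f (a, s) = ((f (a, false)).1, boolFlip (ε a) s) := by
    rintro a (_ | _)
    · rw [hε]
    · rw [show (a, true) = (a, !false) from rfl, hnot, ← hε, ← boolFlip_not]
      rfl
  have hσ : Injective fun a => (f (a, false)).1 := by
    intro a b hab
    have hab' : (f (a, false)).1 = (f (b, false)).1 := hab
    obtain ⟨s, hs⟩ := (boolFlip (ε a)).surjective (boolFlip (ε b) false)
    have := hf (show f (b, false) = f (a, s) by rw [hf' b false, hf' a s, hs, hab'])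
    exact (Prod.ext_iff.mp this).1.symm
  exact ⟨ofBijective _ hσ.bijective_of_finite, ε, hf'⟩

namespace SupIdx

variable {k r q : ℕ}

abbrev center : SupIdx k r q := .inl (.inr ())

def permAction (k r q : ℕ) : (Perm (Fin k) × Perm (Fin r) × Perm (Fin q)) →*
    MulAut (Fin k ⊕ Fin r → Multiplicative (ZMod 2)) :=
  (MulDistribMulAction.toMulAut _ _).comp ((Perm.sumCongrHom _ _).comp
    ((MonoidHom.fst _ _).prod ((MonoidHom.fst _ _).comp (MonoidHom.snd _ _))))

theorem permAction_apply_inl (σ : Perm (Fin k) × Perm (Fin r) × Perm (Fin q))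
    (x : Fin k ⊕ Fin r → Multiplicative (ZMod 2)) (i : Fin k) :
    permAction k r q σ x (.inl i) = x (.inl (σ.1⁻¹ i)) := rfl

theorem permAction_apply_inr (σ : Perm (Fin k) × Perm (Fin r) × Perm (Fin q))
    (x : Fin k ⊕ Fin r → Multiplicative (ZMod 2)) (j : Fin r) :
    permAction k r q σ x (.inr j) = x (.inr (σ.2.1⁻¹ j)) := rfl

abbrev SignedPermGroup (k r q : ℕ) :=
  SemidirectProduct (Fin k ⊕ Fin r → Multiplicative (ZMod 2))
    (Perm (Fin k) × Perm (Fin r) × Perm (Fin q)) (permAction k r q)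

/-- `(x, (σ, τ, ρ))` moves the pairs `{e_i, ê_i}`, `{u_j, v_j}` and the `z_l` to the labels
`σ i`, `τ j`, `ρ l`, swapping the two members of the pair with new label `a` when `x a ≠ 1`. -/
def signedPerm : SignedPermGroup k r q →* Perm (SupIdx k r q) where
  toFun w := sumCongr
    (sumCongr (prodShear w.right.1 fun i => boolFlip (w.left (.inl (w.right.1 i)))) (.refl Unit))
    (sumCongr (prodShear w.right.2.1 fun j => boolFlip (w.left (.inr (w.right.2.1 j))))
      w.right.2.2)
  map_one' := by ext ((⟨i, s⟩ | u) | (⟨j, s⟩ | l)) <;> rfl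
  map_mul' w w' := by
    ext ((⟨i, s⟩ | u) | (⟨j, s⟩ | l)) <;> simp [permAction_apply_inl, permAction_apply_inr]

section signedPerm

variable (w : SignedPermGroup k r q)

@[simp]
theorem signedPerm_inl_inl (i : Fin k) (s : Bool) :
    signedPerm w (.inl (.inl (i, s))) =
      .inl (.inl (w.right.1 i, boolFlip (w.left (.inl (w.right.1 i))) s)) := rfl

@[simp]
theorem signedPerm_center : signedPerm w center = center := rfl

@[simp]
theorem signedPerm_inr_inl (j : Fin r) (s : Bool) :
    signedPerm w (.inr (.inl (j, s))) =
      .inr (.inl (w.right.2.1 j, boolFlip (w.left (.inr (w.right.2.1 j))) s)) := rfl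

@[simp]
theorem signedPerm_inr_inr (l : Fin q) :
    signedPerm w (.inr (.inr l)) = .inr (.inr (w.right.2.2 l)) := rfl

end signedPerm

theorem signedPerm_injective : Injective (signedPerm (k := k) (r := r) (q := q)) := by
  refine (injective_iff_map_eq_one _).mpr fun w hw => ?_
  have h := fun p => Perm.ext_iff.mp hw p
  have hk := fun i => h (.inl (.inl (i, false)))
  have hr := fun j => h (.inr (.inl (j, false)))
  have hq := fun l => h (.inr (.inr l))
  simp only [signedPerm_inl_inl, signedPerm_inr_inl, signedPerm_inr_inr, Perm.one_apply,
    Sum.inl.injEq, Sum.inr.injEq, Prod.mk.injEq] at hk hr hq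
  have hσ : w.right.1 = 1 := Perm.ext fun i => (hk i).1
  have hτ : w.right.2.1 = 1 := Perm.ext fun j => (hr j).1
  refine SemidirectProduct.ext ?_ (Prod.ext hσ (Prod.ext hτ (Perm.ext hq)))
  ext (i | j)
  · simpa [hσ, boolFlip_apply_false_eq_false_iff] using (hk i).2
  · simpa [hτ, boolFlip_apply_false_eq_false_iff] using (hr j).2

/-- `partner p` is the unique `p'` with `[c p, c p'] ≠ 0`; the centre `z` has none. -/
def partner : SupIdx k r q → Option (SupIdx k r q)
  | .inl (.inl (i, s)) => some (.inl (.inl (i, !s)))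
  | .inl (.inr _) => none
  | .inr (.inl (j, s)) => some (.inr (.inl (j, !s)))
  | .inr (.inr l) => some (.inr (.inr l))

theorem supPair_iff_partner_eq_some {p p' : SupIdx k r q} : SupPair p p' ↔ partner p = some p' := by
  rcases p with ((⟨i, _ | _⟩ | _) | (⟨j, _ | _⟩ | l)) <;> simp [SupPair, partner, eq_comm]

theorem supPair_apply_iff_iff_partner_apply {π : Perm (SupIdx k r q)} :
    (∀ p p', SupPair (π p) (π p') ↔ SupPair p p') ↔ ∀ p, partner (π p) = (partner p).map π := by
  simp only [supPair_iff_partner_eq_some]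
  refine ⟨fun h p => ?_, fun h p p' => by simp [h]⟩
  cases hp : partner p with
  | none =>
    by_contra hne
    obtain ⟨p', hp'⟩ := Option.ne_none_iff_exists'.mp hne
    simpa [hp] using (h p (π.symm p')).mp (by simpa using hp')
  | some p' => exact (h p p').mpr hp

structure PreservesPairing (π : Perm (SupIdx k r q)) : Prop where
  partner_apply : ∀ p, partner (π p) = (partner p).map π
  isLeft_apply : ∀ p, (π p).isLeft = p.isLeft

theorem preservesPairing_signedPerm (w : SignedPermGroup k r q) :
    PreservesPairing (signedPerm w) where
  partner_apply p := by
    rcases p with ((⟨i, s⟩ | _) | (⟨j, s⟩ | l)) <;> first | rfl | simp [partner, boolFlip_not]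
  isLeft_apply p := by
    rcases p with ((⟨i, s⟩ | u) | (⟨j, s⟩ | l)) <;> rfl

namespace PreservesPairing

theorem apply_center {π : Perm (SupIdx k r q)} (hπ : PreservesPairing π) :
    π center = center := by
  rcases h : π center with ((⟨i, s⟩ | ⟨⟩) | x)
  · simpa [h, partner] using hπ.partner_apply center
  · rfl
  · simpa [h] using hπ.isLeft_apply center

theorem exists_apply_inl_inl {π : Perm (SupIdx k r q)} (hπ : PreservesPairing π)
    (x : Fin k × Bool) : ∃ y, π (.inl (.inl x)) = .inl (.inl y) := by
  rcases h : π (.inl (.inl x)) with ((y | _) | _)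
  · exact ⟨y, rfl⟩
  · simpa using π.injective (h.trans hπ.apply_center.symm)
  · simpa [h] using hπ.isLeft_apply (.inl (.inl x))

theorem exists_apply_inr_inl {π : Perm (SupIdx k r q)} (hπ : PreservesPairing π)
    (x : Fin r × Bool) : ∃ y, π (.inr (.inl x)) = .inr (.inl y) := by
  rcases h : π (.inr (.inl x)) with (_ | (y | l))
  · simpa [h] using hπ.isLeft_apply (.inr (.inl x))
  · exact ⟨y, rfl⟩
  · have hfix := hπ.partner_apply (.inr (.inl x))
    simp only [h, partner, Option.map_some, Option.some.injEq] at hfix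
    simpa [Prod.ext_iff] using π.injective (hfix.symm.trans h.symm)

theorem exists_apply_inr_inr {π : Perm (SupIdx k r q)} (hπ : PreservesPairing π)
    (l : Fin q) : ∃ l', π (.inr (.inr l)) = .inr (.inr l') := by
  rcases h : π (.inr (.inr l)) with (_ | (y | l'))
  · simpa [h] using hπ.isLeft_apply (.inr (.inr l))
  · simpa [h, partner, Prod.ext_iff] using hπ.partner_apply (.inr (.inr l))
  · exact ⟨l', rfl⟩

theorem exists_signedPerm_eq {π : Perm (SupIdx k r q)} (hπ : PreservesPairing π) :
    ∃ w, signedPerm w = π := by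
  choose fk hfk using hπ.exists_apply_inl_inl
  choose fr hfr using hπ.exists_apply_inr_inl
  choose fq hfq using hπ.exists_apply_inr_inr
  have hk_inj : Injective fk := fun x y h =>
    Sum.inl_injective (Sum.inl_injective (π.injective (by rw [hfk, hfk, h])))
  have hr_inj : Injective fr := fun x y h =>
    Sum.inl_injective (Sum.inr_injective (π.injective (by rw [hfr, hfr, h])))
  have hq_inj : Injective fq := fun x y h =>
    Sum.inr_injective (Sum.inr_injective (π.injective (by rw [hfq, hfq, h])))
  have hk_not : ∀ i s, fk (i, !s) = ((fk (i, s)).1, !(fk (i, s)).2) := fun i s => by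
    simpa [hfk, partner] using (hπ.partner_apply (.inl (.inl (i, s)))).symm
  have hr_not : ∀ j s, fr (j, !s) = ((fr (j, s)).1, !(fr (j, s)).2) := fun j s => by
    simpa [hfr, partner] using (hπ.partner_apply (.inr (.inl (j, s)))).symm
  obtain ⟨σ, ε, hσ⟩ := exists_perm_boolFlip_of_apply_not hk_inj hk_not
  obtain ⟨τ, δ, hτ⟩ := exists_perm_boolFlip_of_apply_not hr_inj hr_not
  refine ⟨⟨Sum.elim (fun i => ε (σ⁻¹ i)) (fun j => δ (τ⁻¹ j)),
    (σ, τ, ofBijective fq hq_inj.bijective_of_finite)⟩, ?_⟩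
  ext ((⟨i, s⟩ | _) | (⟨j, s⟩ | l))
  · simp [hfk, hσ]
  · exact hπ.apply_center.symm
  · simp [hfr, hτ]
  · simp [hfq]

end PreservesPairing

end SupIdx

section GradingAut

variable {F L ι : Type*} [Field F] [AddCommGroup L] [Module F L] [Finite ι]

/-- `Aut(Γ)` for the grading with homogeneous components `F ∙ c p`. -/
def gradingAut (br : L →ₗ[F] L →ₗ[F] L) (E₀ E₁ : Submodule F L) (c : Module.Basis ι F L) :
    Subgroup (L ≃ₗ[F] L) :=
  br.autSubgroup ⊓ (MulAction.stabilizer _ E₀ ⊓ (MulAction.stabilizer _ E₁ ⊓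
    permutingSubgroup c.span_singleton_injective))

namespace gradingAut

variable {br : L →ₗ[F] L →ₗ[F] L} {E₀ E₁ : Submodule F L} {c : Module.Basis ι F L}

noncomputable def toPerm : gradingAut br E₀ E₁ c →* Perm ι :=
  (permutingSubgroup.toPerm c.span_singleton_injective).comp
    (Subgroup.inclusion (inf_le_right.trans (inf_le_right.trans inf_le_right)))

theorem exists_units_smul (f : gradingAut br E₀ E₁ c) (p : ι) :
    ∃ u : Fˣ, (f : L ≃ₗ[F] L) (c p) = u • c (toPerm f p) :=
  LinearEquiv.smul_span_singleton_eq_iff.mp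
    (permutingSubgroup.smul_toPerm (C := fun p => (F ∙ c p)) _ (Subgroup.inclusion _ f) p)

theorem toPerm_eq_iff {f : gradingAut br E₀ E₁ c} {π : Perm ι} :
    toPerm f = π ↔ ∀ p, (f : L ≃ₗ[F] L) • (F ∙ c p) = F ∙ c (π p) :=
  permutingSubgroup.toPerm_eq_iff _

end gradingAut

end GradingAut

section Heisenberg

open SupIdx

variable {F L : Type*} [Field F] [AddCommGroup L] [Module F L] {k r q : ℕ}

structure IsHeisenbergBasis (br : L →ₗ[F] L →ₗ[F] L) (c : Module.Basis (SupIdx k r q) F L) :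
    Prop where
  bracket_e_ehat : ∀ i, br (c (.inl (.inl (i, false)))) (c (.inl (.inl (i, true)))) = c center
  bracket_ehat_e : ∀ i, br (c (.inl (.inl (i, true)))) (c (.inl (.inl (i, false)))) = -c center
  bracket_u_v : ∀ j s, br (c (.inr (.inl (j, s)))) (c (.inr (.inl (j, !s)))) = c center
  bracket_z_z : ∀ l, br (c (.inr (.inr l))) (c (.inr (.inr l))) = c center
  bracket_eq_zero : ∀ p p', ¬ SupPair p p' → br (c p) (c p') = 0

variable {br : L →ₗ[F] L →ₗ[F] L} {c : Module.Basis (SupIdx k r q) F L} {E₀ E₁ : Submodule F L}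

theorem IsHeisenbergBasis.supPair_iff (hH : IsHeisenbergBasis br c) {p p' : SupIdx k r q} :
    SupPair p p' ↔ br (c p) (c p') ≠ 0 := by
  refine ⟨?_, not_imp_comm.mp (hH.bracket_eq_zero p p')⟩
  rintro (⟨i, _ | _, rfl, rfl⟩ | ⟨j, s, rfl, rfl⟩ | ⟨l, rfl, rfl⟩) <;>
    simp [hH.bracket_e_ehat, hH.bracket_ehat_e, hH.bracket_u_v, hH.bracket_z_z, c.ne_zero]

theorem IsHeisenbergBasis.preservesPairing_toPerm (hH : IsHeisenbergBasis br c)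
    (hE : Disjoint E₀ E₁) (h₀ : ∀ p, c (.inl p) ∈ E₀) (h₁ : ∀ p, c (.inr p) ∈ E₁)
    (f : gradingAut br E₀ E₁ c) : PreservesPairing (gradingAut.toPerm f) := by
  choose u hu using gradingAut.exists_units_smul f
  refine ⟨supPair_apply_iff_iff_partner_apply.mp fun p p' => ?_, fun p => ?_⟩
  · rw [hH.supPair_iff, hH.supPair_iff, ne_eq, ne_eq,
      LinearMap.apply_eq_zero_iff_of_mem_autSubgroup f.2.1 (hu p) (hu p')]
  · rw [Bool.eq_iff_iff, ← c.mem_iff_isLeft hE h₀ h₁, ← c.mem_iff_isLeft hE h₀ h₁]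
    exact LinearEquiv.mem_iff_of_smul_eq f.2.2.1 (hu p)

namespace SupIdx

/-- Swapping `e_i` and `ê_i` reverses the sign of `[e_i, ê_i] = z`, which is compensated by
negating the image of `e_i`. -/
def flipSign (F : Type*) [Ring F] (w : SignedPermGroup k r q) : SupIdx k r q → Fˣ
  | .inl (.inl (i, false)) => if w.left (.inl (w.right.1 i)) = 1 then 1 else -1
  | _ => 1

noncomputable def signedEquiv (c : Module.Basis (SupIdx k r q) F L) (w : SignedPermGroup k r q) :
    L ≃ₗ[F] L :=
  c.equiv ((c.reindex (signedPerm w).symm).unitsSMul (flipSign F w)) (.refl _)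

theorem signedEquiv_apply_basis (c : Module.Basis (SupIdx k r q) F L) (w : SignedPermGroup k r q)
    (p : SupIdx k r q) : signedEquiv c w (c p) = flipSign F w p • c (signedPerm w p) := by
  simp [signedEquiv, Module.Basis.unitsSMul_apply]

theorem signedEquiv_smul_span_singleton (c : Module.Basis (SupIdx k r q) F L)
    (w : SignedPermGroup k r q) (p : SupIdx k r q) :
    signedEquiv c w • (F ∙ c p) = F ∙ c (signedPerm w p) :=
  LinearEquiv.smul_span_singleton_eq_iff.mpr ⟨_, signedEquiv_apply_basis c w p⟩

theorem signedEquiv_smul_eq_of_isCompl (hE : IsCompl E₀ E₁) (h₀ : ∀ p, c (.inl p) ∈ E₀)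
    (h₁ : ∀ p, c (.inr p) ∈ E₁) (w : SignedPermGroup k r q) :
    signedEquiv c w • E₀ = E₀ ∧ signedEquiv c w • E₁ = E₁ := by
  obtain ⟨hspan₀, hspan₁⟩ := c.span_image_range_inl_inr_eq hE h₀ h₁
  have hinl : ∀ p : SupIdx k r q, p ∈ Set.range Sum.inl ↔ p.isLeft := by rintro (_ | _) <;> simp
  have hinr : ∀ p : SupIdx k r q, p ∈ Set.range Sum.inr ↔ p.isLeft = false := by
    rintro (_ | _) <;> simp
  have hparity := (preservesPairing_signedPerm w).isLeft_apply
  constructor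
  · rw [← hspan₀]
    exact (signedEquiv c w).smul_span_image_eq (signedEquiv_apply_basis c w)
      fun p => by rw [hinl, hinl, hparity]
  · rw [← hspan₁]
    exact (signedEquiv c w).smul_span_image_eq (signedEquiv_apply_basis c w)
      fun p => by rw [hinr, hinr, hparity]

end SupIdx

theorem IsHeisenbergBasis.signedEquiv_mem_autSubgroup (hH : IsHeisenbergBasis br c)
    (w : SignedPermGroup k r q) : signedEquiv c w ∈ br.autSubgroup := by
  suffices h : br.compr₂ (signedEquiv c w : L →ₗ[F] L) =
      br.compl₁₂ (signedEquiv c w : L →ₗ[F] L) (signedEquiv c w : L →ₗ[F] L) from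
    fun x y => LinearMap.congr_fun₂ h x y
  refine LinearMap.ext_basis c c fun p p' => ?_
  simp only [LinearMap.compr₂_apply, LinearMap.compl₁₂_apply, LinearEquiv.coe_coe,
    signedEquiv_apply_basis, LinearMap.map_smul_of_tower, LinearMap.smul_apply]
  by_cases hpp : SupPair p p'
  · rcases hpp with ⟨i, s, rfl, rfl⟩ | ⟨j, s, rfl, rfl⟩ | ⟨l, rfl, rfl⟩
    · obtain hx | hx : w.left (.inl (w.right.1 i)) = 1 ∨
          w.left (.inl (w.right.1 i)) = Multiplicative.ofAdd 1 := by
        generalize w.left (.inl (w.right.1 i)) = x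
        revert x
        decide
      · cases s <;> simp [flipSign, hx, hH.bracket_e_ehat, hH.bracket_ehat_e,
          signedEquiv_apply_basis]
      · have hflip : ∀ s, boolFlip (Multiplicative.ofAdd 1) s = !s := by decide
        cases s <;> simp [flipSign, hx, hflip, hH.bracket_e_ehat, hH.bracket_ehat_e,
          signedEquiv_apply_basis]
    · simp [flipSign, boolFlip_not, hH.bracket_u_v, signedEquiv_apply_basis]
    · simp [flipSign, hH.bracket_z_z, signedEquiv_apply_basis]
  · have hpp' := (supPair_apply_iff_iff_partner_apply.mpr
      (preservesPairing_signedPerm w).partner_apply p p').not.mpr hpp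
    simp [hH.bracket_eq_zero _ _ hpp, hH.bracket_eq_zero _ _ hpp']

theorem IsHeisenbergBasis.range_toPerm (hH : IsHeisenbergBasis br c) (hE : IsCompl E₀ E₁)
    (h₀ : ∀ p, c (.inl p) ∈ E₀) (h₁ : ∀ p, c (.inr p) ∈ E₁) :
    (gradingAut.toPerm (br := br) (E₀ := E₀) (E₁ := E₁) (c := c)).range = signedPerm.range := by
  ext π
  constructor
  · rintro ⟨f, rfl⟩
    exact (hH.preservesPairing_toPerm hE.disjoint h₀ h₁ f).exists_signedPerm_eq
  · rintro ⟨w, rfl⟩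
    have hE_w := signedEquiv_smul_eq_of_isCompl hE h₀ h₁ w
    have hf : signedEquiv c w ∈ gradingAut br E₀ E₁ c := ⟨hH.signedEquiv_mem_autSubgroup w,
      hE_w.1, hE_w.2, fun p => ⟨_, signedEquiv_smul_span_singleton c w p⟩⟩
    exact ⟨⟨_, hf⟩, gradingAut.toPerm_eq_iff.mpr (signedEquiv_smul_span_singleton c w)⟩

end Heisenberg

theorem heisenberg_superalgebra_fine_grading_weyl_group_general
    (F : Type*) [Field F]
    (L : Type*) [AddCommGroup L] [Module F L]
    (E0 E1 : Submodule F L) (hcompl : IsCompl E0 E1)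
    (k r q : ℕ)
    (c : Module.Basis (SupIdx k r q) F L)
    (heven : ∀ p : (Fin k × Bool) ⊕ Unit, c (Sum.inl p) ∈ E0)
    (hodd : ∀ p : (Fin r × Bool) ⊕ Fin q, c (Sum.inr p) ∈ E1)
    (br : L →ₗ[F] L →ₗ[F] L)
    (hee : ∀ i : Fin k, br (c (Sum.inl (Sum.inl (i, false)))) (c (Sum.inl (Sum.inl (i, true))))
      = c (Sum.inl (Sum.inr ())))
    (heem : ∀ i : Fin k, br (c (Sum.inl (Sum.inl (i, true)))) (c (Sum.inl (Sum.inl (i, false))))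
      = -c (Sum.inl (Sum.inr ())))
    (huv : ∀ j : Fin r, ∀ s : Bool, br (c (Sum.inr (Sum.inl (j, s)))) (c (Sum.inr (Sum.inl (j, !s))))
      = c (Sum.inl (Sum.inr ())))
    (hzz : ∀ l : Fin q, br (c (Sum.inr (Sum.inr l))) (c (Sum.inr (Sum.inr l)))
      = c (Sum.inl (Sum.inr ())))
    (h0 : ∀ p p' : SupIdx k r q, ¬ SupPair p p' → br (c p) (c p') = 0)
    -- the homogeneous components of Γ^r
    (C : SupIdx k r q → Submodule F L) (hC : ∀ p, C p = F ∙ c p) :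
    ∃ AutΓ : Subgroup (L ≃ₗ[F] L),
      (↑AutΓ = {f : L ≃ₗ[F] L |
        (∀ x y : L, f (br x y) = br (f x) (f y)) ∧
        E0.map (f : L →ₗ[F] L) = E0 ∧ E1.map (f : L →ₗ[F] L) = E1 ∧
        ∀ p, ∃ p', (C p).map (f : L →ₗ[F] L) = C p'}) ∧
      ∃ φ : (Equiv.Perm (Fin k) × Equiv.Perm (Fin r) × Equiv.Perm (Fin q)) →*
          MulAut ((Fin k ⊕ Fin r) → Multiplicative (ZMod 2)),
        (∀ σ (x : (Fin k ⊕ Fin r) → Multiplicative (ZMod 2)) (i : Fin k),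
          φ σ x (Sum.inl i) = x (Sum.inl (σ.1⁻¹ i))) ∧
        (∀ σ (x : (Fin k ⊕ Fin r) → Multiplicative (ZMod 2)) (j : Fin r),
          φ σ x (Sum.inr j) = x (Sum.inr (σ.2.1⁻¹ j))) ∧
        ∃ θ : AutΓ →* SemidirectProduct ((Fin k ⊕ Fin r) → Multiplicative (ZMod 2))
            (Equiv.Perm (Fin k) × Equiv.Perm (Fin r) × Equiv.Perm (Fin q)) φ,
          Function.Surjective θ ∧
          ∀ f : AutΓ, θ f = 1 ↔
            ∀ p, (C p).map ((f : L ≃ₗ[F] L) : L →ₗ[F] L) = C p := by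
  obtain rfl : C = fun p => F ∙ c p := funext hC
  have hH : IsHeisenbergBasis br c := ⟨hee, heem, huv, hzz, h0⟩
  obtain ⟨θ, hθ, hjθ⟩ := MonoidHom.exists_surjective_comp_eq_of_range_eq
    SupIdx.signedPerm_injective
    (hH.range_toPerm hcompl heven hodd)
  refine ⟨gradingAut br E0 E1 c, rfl, SupIdx.permAction k r q,
    SupIdx.permAction_apply_inl, SupIdx.permAction_apply_inr, θ, hθ, fun f => ?_⟩
  rw [← map_eq_one_iff _ SupIdx.signedPerm_injective, ← MonoidHom.comp_apply, hjθ,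
    gradingAut.toPerm_eq_iff]
  rfl

/-- The Weyl group of the fine grading `Γ^r` of the Heisenberg superalgebra
`H_{n,m}` (homogeneous basis `{z, e_i, ê_i, u_j, v_j, z_l}`, `n = 2k+1`,
`q = m - 2r`) is `ℤ_2^{r+k} ⋊ (S_k × S_r × S_q)`: there is a homomorphism
from the group of (super)automorphisms permuting the one-dimensional
homogeneous components onto the semidirect product (the symmetric groups
permuting the corresponding factors of `ℤ_2^{k+r}`) with kernel exactly the
stabilizer of the grading. -/
theorem heisenberg_superalgebra_fine_grading_weyl_group
    (F : Type*) [Field F] [IsAlgClosed F] (hchar : (2 : F) ≠ 0)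
    (L : Type*) [AddCommGroup L] [Module F L]
    (E0 E1 : Submodule F L) (hcompl : IsCompl E0 E1)
    (k r q : ℕ)
    (c : Module.Basis (SupIdx k r q) F L)
    (heven : ∀ p : (Fin k × Bool) ⊕ Unit, c (Sum.inl p) ∈ E0)
    (hodd : ∀ p : (Fin r × Bool) ⊕ Fin q, c (Sum.inr p) ∈ E1)
    (br : L →ₗ[F] L →ₗ[F] L)
    (hee : ∀ i : Fin k, br (c (Sum.inl (Sum.inl (i, false)))) (c (Sum.inl (Sum.inl (i, true))))
      = c (Sum.inl (Sum.inr ())))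
    (heem : ∀ i : Fin k, br (c (Sum.inl (Sum.inl (i, true)))) (c (Sum.inl (Sum.inl (i, false))))
      = -c (Sum.inl (Sum.inr ())))
    (huv : ∀ j : Fin r, ∀ s : Bool, br (c (Sum.inr (Sum.inl (j, s)))) (c (Sum.inr (Sum.inl (j, !s))))
      = c (Sum.inl (Sum.inr ())))
    (hzz : ∀ l : Fin q, br (c (Sum.inr (Sum.inr l))) (c (Sum.inr (Sum.inr l)))
      = c (Sum.inl (Sum.inr ())))
    (h0 : ∀ p p' : SupIdx k r q, ¬ SupPair p p' → br (c p) (c p') = 0)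
    -- the homogeneous components of Γ^r
    (C : SupIdx k r q → Submodule F L) (hC : ∀ p, C p = F ∙ c p) :
    ∃ AutΓ : Subgroup (L ≃ₗ[F] L),
      (↑AutΓ = {f : L ≃ₗ[F] L |
        (∀ x y : L, f (br x y) = br (f x) (f y)) ∧
        E0.map (f : L →ₗ[F] L) = E0 ∧ E1.map (f : L →ₗ[F] L) = E1 ∧
        ∀ p, ∃ p', (C p).map (f : L →ₗ[F] L) = C p'}) ∧
      ∃ φ : (Equiv.Perm (Fin k) × Equiv.Perm (Fin r) × Equiv.Perm (Fin q)) →*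
          MulAut ((Fin k ⊕ Fin r) → Multiplicative (ZMod 2)),
        (∀ σ (x : (Fin k ⊕ Fin r) → Multiplicative (ZMod 2)) (i : Fin k),
          φ σ x (Sum.inl i) = x (Sum.inl (σ.1⁻¹ i))) ∧
        (∀ σ (x : (Fin k ⊕ Fin r) → Multiplicative (ZMod 2)) (j : Fin r),
          φ σ x (Sum.inr j) = x (Sum.inr (σ.2.1⁻¹ j))) ∧
        ∃ θ : AutΓ →* SemidirectProduct ((Fin k ⊕ Fin r) → Multiplicative (ZMod 2))
            (Equiv.Perm (Fin k) × Equiv.Perm (Fin r) × Equiv.Perm (Fin q)) φ,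
          Function.Surjective θ ∧
          ∀ f : AutΓ, θ f = 1 ↔
            ∀ p, (C p).map ((f : L ≃ₗ[F] L) : L →ₗ[F] L) = C p :=
  heisenberg_superalgebra_fine_grading_weyl_group_general F L E0 E1 hcompl k r q c heven hodd br hee
    heem huv hzz h0 C hC
end
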